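/- arXiv:0905.4288 — 5 statements merged into one kernel-verified Lean document; each statement's English description precedes it below -/
import Mathlib

section
/- (Backward slicing.) Let 0 ≤ i < n and let J_{i+1},…,J_n be a backward consistent sequence of ideals of U. Define the subset X_i of U as the union of: J_{i+1}; the set [J_{i+p} + D + (1,0)] ∩ U if i + p ≤ n; and the set [J_{i+α_i} + D + (1, −p² + p·α_i)] ∩ U if α_i exists, where α_i is the largest integer with 1 ≤ α_i ≤ p−1, i + α_i ≤ n and J_{i+α_i} ≠ ∅. Define Y_i as the union of all ideals K of U satisfying [K + D − (0,p)] ∩ U ⊆ J_{i+1}. Then X_i and Y_i are ideals of U, and for every ideal J of U, J is consistent with J_{i+1},…,J_n if and only if X_i ⊆ J ⊆ Y_i. -/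
open Pointwise

noncomputable section

/-- The 2-dimensional cone `D = {(x,y) : x + p y ≤ 0, p² x + y ≤ 0}`. -/
def D2 (p : ℕ) : Set (ℝ × ℝ) :=
  {w | w.1 + (p : ℝ) * w.2 ≤ 0 ∧ (p : ℝ) ^ 2 * w.1 + w.2 ≤ 0}

/-- The partial order `≺` on `ℝ²`: `u ≺ v` iff `u - v ∈ D`. -/
def prec2 (p : ℕ) (u v : ℝ × ℝ) : Prop := u - v ∈ D2 p

/-- `I` is an ideal of `Ω ⊆ ℝ²` for the order `≺`. -/
def IsIdeal2 (p : ℕ) (Ω I : Set (ℝ × ℝ)) : Prop :=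
  I ⊆ Ω ∧ ∀ u ∈ I, ∀ v ∈ Ω, prec2 p v u → v ∈ I

/-- The integer rectangle `[a,b] × [c,d]` viewed inside `ℝ²`. -/
def box (a b c d : ℤ) : Set (ℝ × ℝ) :=
  {w | ∃ x y : ℤ, w = ((x : ℝ), (y : ℝ)) ∧ a ≤ x ∧ x ≤ b ∧ c ≤ y ∧ y ≤ d}

/-- The partial order `≺` on `ℝ³` defined by the three inequalities. -/
def prec3 (p : ℕ) (u v : ℝ × ℝ × ℝ) : Prop :=
  (u.1 - v.1) + (p : ℝ) * (u.2.1 - v.2.1) + (p : ℝ) ^ 2 * (u.2.2 - v.2.2) ≤ 0 ∧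
  (p : ℝ) ^ 2 * (u.1 - v.1) + (u.2.1 - v.2.1) + (p : ℝ) * (u.2.2 - v.2.2) ≤ 0 ∧
  (p : ℝ) * (u.1 - v.1) + (p : ℝ) ^ 2 * (u.2.1 - v.2.1) + (u.2.2 - v.2.2) ≤ 0

/-- The 3-dimensional simplicial cone `Δ = {w : w ≺ 0}`. -/
def Delta3 (p : ℕ) : Set (ℝ × ℝ × ℝ) := {w | prec3 p w 0}

/-- `I` is an ideal of `Ω ⊆ ℝ³` for the order `≺`. -/
def IsIdeal3 (p : ℕ) (Ω I : Set (ℝ × ℝ × ℝ)) : Prop :=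
  I ⊆ Ω ∧ ∀ u ∈ I, ∀ v ∈ Ω, prec3 p v u → v ∈ I

/-- `⋃_{j ∈ s} (J j × {j}) ⊆ ℝ³`. -/
def stack (J : ℕ → Set (ℝ × ℝ)) (s : Set ℕ) : Set (ℝ × ℝ × ℝ) :=
  {w | ∃ j ∈ s, (w.1, w.2.1) ∈ J j ∧ w.2.2 = (j : ℝ)}

/-- `U × s ⊆ ℝ³`. -/
def slab (U : Set (ℝ × ℝ)) (s : Set ℕ) : Set (ℝ × ℝ × ℝ) :=
  {w | (w.1, w.2.1) ∈ U ∧ ∃ j ∈ s, w.2.2 = (j : ℝ)}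


namespace Stmt13Aux

lemma mem_box_iff {a b c d : ℤ} {x y : ℤ} :
    ((x : ℝ), (y : ℝ)) ∈ box a b c d ↔ (a ≤ x ∧ x ≤ b ∧ c ≤ y ∧ y ≤ d) := by
  constructor
  · rintro ⟨x', y', hxy, h⟩
    have hx : (x : ℝ) = (x' : ℝ) := congrArg Prod.fst hxy
    have hy : (y : ℝ) = (y' : ℝ) := congrArg Prod.snd hxy
    have hx' : x = x' := by exact_mod_cast hx
    have hy' : y = y' := by exact_mod_cast hy
    subst hx'; subst hy'; exact h
  · intro h; exact ⟨x, y, rfl, h⟩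

lemma mem_D2_iff {p : ℕ} {x y : ℤ} :
    ((x : ℝ), (y : ℝ)) ∈ D2 p ↔ (x + (p:ℤ) * y ≤ 0 ∧ (p:ℤ)^2 * x + y ≤ 0) := by
  unfold D2
  constructor
  · rintro ⟨h1, h2⟩
    have h1' : (x:ℝ) + (p:ℝ) * (y:ℝ) ≤ 0 := h1
    have h2' : (p:ℝ)^2 * (x:ℝ) + (y:ℝ) ≤ 0 := h2
    constructor
    · exact_mod_cast h1'
    · exact_mod_cast h2'
  · rintro ⟨h1, h2⟩
    constructor
    · show (x:ℝ) + (p:ℝ) * (y:ℝ) ≤ 0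
      exact_mod_cast h1
    · show (p:ℝ)^2 * (x:ℝ) + (y:ℝ) ≤ 0
      exact_mod_cast h2

lemma D2_add {p : ℕ} {a b : ℝ × ℝ} (ha : a ∈ D2 p) (hb : b ∈ D2 p) : a + b ∈ D2 p := by
  obtain ⟨h1, h2⟩ := ha
  obtain ⟨h3, h4⟩ := hb
  constructor
  · show (a.1 + b.1) + (p:ℝ) * (a.2 + b.2) ≤ 0
    linarith
  · show (p:ℝ)^2 * (a.1 + b.1) + (a.2 + b.2) ≤ 0
    linarith

lemma mem_add3_iff {A B : Set (ℝ × ℝ)} {c v : ℝ × ℝ} :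
    v ∈ A + B + {c} ↔ ∃ a ∈ A, ∃ b ∈ B, v = a + b + c := by
  constructor
  · rintro ⟨x, hx, y, hy, rfl⟩
    rcases hx with ⟨a, ha, b, hb, rfl⟩
    rcases hy with rfl
    exact ⟨a, ha, b, hb, rfl⟩
  · rintro ⟨a, ha, b, hb, rfl⟩
    exact ⟨a + b, ⟨a, ha, b, hb, rfl⟩, c, rfl, rfl⟩

lemma mem_sub_singleton_iff {A : Set (ℝ × ℝ)} {c v : ℝ × ℝ} :
    v ∈ A - {c} ↔ ∃ a ∈ A, v = a - c := by
  constructor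
  · rintro ⟨a, ha, b, rfl, rfl⟩
    exact ⟨a, ha, rfl⟩
  · rintro ⟨a, ha, rfl⟩
    exact ⟨a, ha, c, rfl, rfl⟩

end Stmt13Aux

namespace Stmt13Aux

lemma sub_mk (a b c d : ℝ) : ((a, b) : ℝ × ℝ) - (c, d) = (a - c, b - d) := rfl

lemma idealstep {p n : ℕ} {I : Set (ℝ × ℝ)} (hI : IsIdeal2 p (box 0 n 0 n) I)
    {ux uy vx vy : ℤ} (hu : ((ux:ℝ), (uy:ℝ)) ∈ I)
    (hv1 : 0 ≤ vx) (hv2 : vx ≤ (n:ℤ)) (hv3 : 0 ≤ vy) (hv4 : vy ≤ (n:ℤ))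
    (l1 : (vx - ux) + (p:ℤ) * (vy - uy) ≤ 0)
    (l2 : (p:ℤ)^2 * (vx - ux) + (vy - uy) ≤ 0) :
    ((vx:ℝ), (vy:ℝ)) ∈ I := by
  apply hI.2 _ hu _ (mem_box_iff.mpr ⟨hv1, hv2, hv3, hv4⟩)
  show ((vx:ℝ), (vy:ℝ)) - ((ux:ℝ), (uy:ℝ)) ∈ D2 p
  rw [sub_mk]
  have h1 : ((vx:ℝ) - ux) = (((vx - ux : ℤ)):ℝ) := by push_cast; ring
  have h2 : ((vy:ℝ) - uy) = (((vy - uy : ℤ)):ℝ) := by push_cast; ring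
  rw [h1, h2]
  exact mem_D2_iff.mpr ⟨l1, l2⟩

lemma bounds_of_mem {p n : ℕ} {I : Set (ℝ × ℝ)} (hI : IsIdeal2 p (box 0 n 0 n) I)
    {x y : ℤ} (hu : ((x:ℝ), (y:ℝ)) ∈ I) :
    0 ≤ x ∧ x ≤ (n:ℤ) ∧ 0 ≤ y ∧ y ≤ (n:ℤ) :=
  mem_box_iff.mp (hI.1 hu)

lemma step3 {p n i : ℕ} {J : ℕ → Set (ℝ × ℝ)}
    (hbc : IsIdeal3 p (slab (box 0 n 0 n) {j | i < j ∧ j ≤ n})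
      (stack J {j | i < j ∧ j ≤ n}))
    {j j' : ℕ} (hj1 : i < j) (hj2 : j ≤ n) (hj1' : i < j') (hj2' : j' ≤ n)
    {ux uy vx vy : ℤ} (hu : ((ux:ℝ), (uy:ℝ)) ∈ J j)
    (hv1 : 0 ≤ vx) (hv2 : vx ≤ (n:ℤ)) (hv3 : 0 ≤ vy) (hv4 : vy ≤ (n:ℤ))
    (L1 : (vx - ux) + (p:ℤ) * (vy - uy) + (p:ℤ)^2 * ((j':ℤ) - (j:ℤ)) ≤ 0)
    (L2 : (p:ℤ)^2 * (vx - ux) + (vy - uy) + (p:ℤ) * ((j':ℤ) - (j:ℤ)) ≤ 0)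
    (L3 : (p:ℤ) * (vx - ux) + (p:ℤ)^2 * (vy - uy) + ((j':ℤ) - (j:ℤ)) ≤ 0) :
    ((vx:ℝ), (vy:ℝ)) ∈ J j' := by
  have hv' : ((vx:ℝ), (vy:ℝ), ((j':ℕ):ℝ)) ∈ stack J {j | i < j ∧ j ≤ n} := by
    apply hbc.2 ((ux:ℝ), (uy:ℝ), ((j:ℕ):ℝ)) ⟨j, ⟨hj1, hj2⟩, hu, rfl⟩
    · exact ⟨mem_box_iff.mpr ⟨hv1, hv2, hv3, hv4⟩, j', ⟨hj1', hj2'⟩, rfl⟩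
    · refine ⟨?_, ?_, ?_⟩
      · show ((vx:ℝ) - ux) + (p:ℝ) * ((vy:ℝ) - uy) + (p:ℝ)^2 * (((j':ℕ):ℝ) - ((j:ℕ):ℝ)) ≤ 0
        exact_mod_cast L1
      · show (p:ℝ)^2 * ((vx:ℝ) - ux) + ((vy:ℝ) - uy) + (p:ℝ) * (((j':ℕ):ℝ) - ((j:ℕ):ℝ)) ≤ 0
        exact_mod_cast L2
      · show (p:ℝ) * ((vx:ℝ) - ux) + (p:ℝ)^2 * ((vy:ℝ) - uy) + (((j':ℕ):ℝ) - ((j:ℕ):ℝ)) ≤ 0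
        exact_mod_cast L3
  rcases hv' with ⟨j'', hj''s, hmem, hcast⟩
  have hcast' : ((j':ℕ):ℝ) = ((j'':ℕ):ℝ) := hcast
  have : j' = j'' := by exact_mod_cast hcast'
  subst this
  exact hmem

end Stmt13Aux

namespace Stmt13Aux

lemma neg_factor {P S : ℤ} (hP : 0 ≤ P) (h : S ≤ 0) : P * S ≤ 0 :=
  mul_nonpos_of_nonneg_of_nonpos hP h

set_option maxHeartbeats 4000000 in
lemma forced {p n i : ℕ} (hp2 : 2 ≤ p) {J : ℕ → Set (ℝ × ℝ)}
    (hJideal : ∀ j, i < j → j ≤ n → IsIdeal2 p (box 0 n 0 n) (J j))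
    (hbc : IsIdeal3 p (slab (box 0 n 0 n) {j | i < j ∧ j ≤ n})
      (stack J {j | i < j ∧ j ≤ n})) :
    ∀ k : ℕ, 1 ≤ k → i + k ≤ n → ∀ ux uy vx vy : ℤ,
    ((ux:ℝ), (uy:ℝ)) ∈ J (i + k) →
    0 ≤ vx → vx ≤ (n:ℤ) → 0 ≤ vy → vy ≤ (n:ℤ) →
    (p:ℤ)^2 * (vx - ux) + (vy - uy) ≤ (p:ℤ) * (k:ℤ) →
    (p:ℤ) * (vx - ux) + (p:ℤ)^2 * (vy - uy) ≤ (k:ℤ) →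
    ((vx:ℝ), (vy:ℝ)) ∈ J (i + 1) ∪
        {w | i + p ≤ n ∧ w ∈ (J (i + p) + D2 p + {((1 : ℝ), (0 : ℝ))}) ∩ box 0 n 0 n} ∪
        {w | ∃ α : ℕ,
          ((1 ≤ α ∧ α ≤ p - 1 ∧ i + α ≤ n ∧ J (i + α) ≠ ∅) ∧
            ∀ β : ℕ, (1 ≤ β ∧ β ≤ p - 1 ∧ i + β ≤ n ∧ J (i + β) ≠ ∅) → β ≤ α) ∧
          w ∈ (J (i + α) + D2 p +
              {((1 : ℝ), -(p : ℝ) ^ 2 + (p : ℝ) * (α : ℝ))}) ∩ box 0 n 0 n} := by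
  intro k hk1 hkn ux uy vx vy hu hv1 hv2 hv3 hv4 hA hB
  classical
  have hik : i < i + k := by omega
  obtain ⟨hux0, huxn, huy0, huyn⟩ := bounds_of_mem (hJideal (i+k) hik hkn) hu
  have hP2 : (2:ℤ) ≤ (p:ℤ) := by exact_mod_cast hp2
  have hP0 : (0:ℤ) ≤ (p:ℤ) := by linarith
  have hP31 : (0:ℤ) ≤ (p:ℤ)^3 - 1 := by
    have h := pow_le_pow_left₀ (by norm_num : (0:ℤ) ≤ 2) hP2 3
    norm_num at h
    linarith
  have hP21 : (0:ℤ) ≤ (p:ℤ)^2 - 1 := by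
    have h := pow_le_pow_left₀ (by norm_num : (0:ℤ) ≤ 2) hP2 2
    norm_num at h
    linarith
  have hK1 : (1:ℤ) ≤ (k:ℤ) := by exact_mod_cast hk1
  have hKn : (i:ℤ) + (k:ℤ) ≤ (n:ℤ) := by exact_mod_cast hkn
  have hi0 : (0:ℤ) ≤ (i:ℤ) := by positivity
  by_cases hBK : (k:ℤ) ≤ (p:ℤ) * (vx - ux) + (p:ℤ)^2 * (vy - uy)
  · -- CASE 2a : tight B
    have hEq : (p:ℤ) * (vx - ux) + (p:ℤ)^2 * (vy - uy) = (k:ℤ) := le_antisymm hB hBK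
    have hEq' : (p:ℤ) * ((vx - ux) + (p:ℤ) * (vy - uy)) = (k:ℤ) := by linear_combination hEq
    have hBq1 : 1 ≤ (vx - ux) + (p:ℤ) * (vy - uy) := by
      by_contra h'
      push_neg at h'
      have h'' : (vx - ux) + (p:ℤ) * (vy - uy) ≤ 0 := by omega
      have h3 := neg_factor hP0 h''
      linarith [hEq', hK1]
    have hKP : (p:ℤ) ≤ (k:ℤ) := by
      have h3 := mul_le_mul_of_nonneg_left hBq1 hP0
      rw [mul_one] at h3
      linarith [hEq']
    have hpk : p ≤ k := by exact_mod_cast hKP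
    have hipn : i + p ≤ n := by omega
    have hPn : (p:ℤ) - 1 ≤ (n:ℤ) := by omega
    have hBq2ofK : ¬ (k = p) → 2 ≤ (vx - ux) + (p:ℤ) * (vy - uy) := by
      intro hkp
      by_contra h'
      push_neg at h'
      have hBqe : (vx - ux) + (p:ℤ) * (vy - uy) = 1 := by omega
      rw [hBqe, mul_one] at hEq'
      exact hkp (by exact_mod_cast hEq'.symm)
    by_cases hvx : 1 ≤ vx
    · -- w = (vx - 1, vy) lands in J (i+p)
      have hw : (((vx - 1 : ℤ):ℝ), (vy:ℝ)) ∈ J (i + p) := by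
        by_cases hkp : k = p
        · rw [hkp] at hu hEq' hA
          have hBqEq : (vx - ux) + (p:ℤ) * (vy - uy) = 1 := by
            have h1 : (p:ℤ) * ((vx - ux) + (p:ℤ) * (vy - uy)) = (p:ℤ) * 1 := by
              rw [mul_one]; exact hEq'
            exact mul_left_cancel₀ (by omega) h1
          refine idealstep (hJideal (i+p) (by omega) hipn) hu (by omega) (by omega) hv3 hv4 ?_ ?_
          · linarith
          · nlinarith [hA]
        · have hKP1 : (p:ℤ) + 1 ≤ (k:ℤ) := by
            have : p < k := by omega
            exact_mod_cast this
          have hBq2 := hBq2ofK hkp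
          refine step3 hbc hik hkn (by omega) hipn hu (by omega) (by omega) hv3 hv4 ?_ ?_ ?_
          · push_cast
            nlinarith [hBq2, hP2, hEq',
              mul_nonneg hP31 (by linarith : (0:ℤ) ≤ (vx - ux) + (p:ℤ) * (vy - uy) - 1)]
          · push_cast; nlinarith [hA]
          · push_cast; nlinarith [hEq]
      refine Set.mem_union_left _ (Set.mem_union_right _ ⟨hipn, ?_, mem_box_iff.mpr ⟨hv1, hv2, hv3, hv4⟩⟩)
      refine mem_add3_iff.mpr ⟨_, hw, ((0:ℝ), (0:ℝ)), ⟨by norm_num, by norm_num⟩, ?_⟩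
      refine Prod.ext_iff.mpr ⟨?_, ?_⟩
      · show (vx:ℝ) = ((vx - 1 : ℤ):ℝ) + 0 + 1; push_cast; ring
      · show (vy:ℝ) = (vy:ℝ) + 0 + 0; ring
    · -- vx = 0
      have hvx0 : vx = 0 := by omega
      have hdb1 : 1 ≤ vy - uy := by
        by_contra h'
        push_neg at h'
        have h'' : vy - uy ≤ 0 := by omega
        have h3 := neg_factor hP0 h''
        linarith [hBq1, hux0, hvx0]
      have hvy1 : 1 ≤ vy := by omega
      by_cases hA3 : (p:ℤ)^2 * (vx - ux) + (vy - uy) ≤ (p:ℤ) * (k:ℤ) - (p:ℤ)^3 + 1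
      · -- w = (p - 1, vy - 1)
        have hw : ((((p:ℤ) - 1 : ℤ):ℝ), ((vy - 1 : ℤ):ℝ)) ∈ J (i + p) := by
          by_cases hkp : k = p
          · rw [hkp] at hu hEq' hA3
            have hBqEq : (vx - ux) + (p:ℤ) * (vy - uy) = 1 := by
              have h1 : (p:ℤ) * ((vx - ux) + (p:ℤ) * (vy - uy)) = (p:ℤ) * 1 := by
                rw [mul_one]; exact hEq'
              exact mul_left_cancel₀ (by omega) h1
            refine idealstep (hJideal (i+p) (by omega) hipn) hu (by omega) hPn (by omega) (by omega) ?_ ?_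
            · have h9 : ((p:ℤ) - 1 - ux) + (p:ℤ) * ((vy - 1) - uy) =
                  ((vx - ux) + (p:ℤ) * (vy - uy)) - 1 - vx := by ring
              rw [h9, hBqEq]
              omega
            · nlinarith [hA3, hvx0]
          · have hKP1 : (p:ℤ) + 1 ≤ (k:ℤ) := by
              have : p < k := by omega
              exact_mod_cast this
            have hBq2 := hBq2ofK hkp
            refine step3 hbc hik hkn (by omega) hipn hu (by omega) hPn (by omega) (by omega) ?_ ?_ ?_
            · push_cast
              nlinarith [hBq2, hP2, hvx0, hEq',
                mul_nonneg hP31 (by linarith : (0:ℤ) ≤ (vx - ux) + (p:ℤ) * (vy - uy) - 1)]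
            · push_cast; nlinarith [hA3, hvx0]
            · push_cast; nlinarith [hEq, hvx0]
        refine Set.mem_union_left _ (Set.mem_union_right _ ⟨hipn, ?_, mem_box_iff.mpr ⟨hv1, hv2, hv3, hv4⟩⟩)
        refine mem_add3_iff.mpr ⟨_, hw, (((-(p:ℤ) : ℤ):ℝ), ((1:ℤ):ℝ)), ?_, ?_⟩
        · refine mem_D2_iff.mpr ⟨by nlinarith, by nlinarith⟩
        · refine Prod.ext_iff.mpr ⟨?_, ?_⟩
          · show (vx:ℝ) = (((p:ℤ) - 1 : ℤ):ℝ) + ((-(p:ℤ) : ℤ):ℝ) + 1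
            rw [hvx0]; push_cast; ring
          · show (vy:ℝ) = ((vy - 1 : ℤ):ℝ) + ((1:ℤ):ℝ) + 0; push_cast; ring
      · exfalso
        push_neg at hA3
        nlinarith [hA3, hEq, hdb1, hP2, hvx0,
          mul_nonneg hP31 (by linarith : (0:ℤ) ≤ (vy - uy) - 1)]
  · -- B not tight
    push_neg at hBK
    have hBnot : (p:ℤ) * (vx - ux) + (p:ℤ)^2 * (vy - uy) ≤ (k:ℤ) - 1 := by
      linarith [Int.add_one_le_iff.mpr hBK]
    by_cases h1a : (p:ℤ)^2 * (vx - ux) + (vy - uy) ≤ (p:ℤ) * ((k:ℤ) - 1)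
    · -- CASE 1 : reduce to level i+1
      have hmem : ((vx:ℝ), (vy:ℝ)) ∈ J (i + 1) := by
        by_cases hk1' : k = 1
        · subst hk1'
          refine idealstep (hJideal (i+1) (by omega) (by omega)) hu hv1 hv2 hv3 hv4 ?_ ?_
          · have hK1' : ((1:ℕ):ℤ) = 1 := by norm_num
            rw [hK1'] at hBnot
            by_contra h'
            push_neg at h'
            have h'' : 1 ≤ (vx - ux) + (p:ℤ) * (vy - uy) := by omega
            nlinarith [hBnot, h'', hP2]
          · have hK1' : ((1:ℕ):ℤ) = 1 := by norm_num
            rw [hK1'] at h1a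
            linarith [h1a]
        · have hK2 : (2:ℤ) ≤ (k:ℤ) := by
            have : 2 ≤ k := by omega
            exact_mod_cast this
          refine step3 hbc hik hkn (by omega) (by omega) hu hv1 hv2 hv3 hv4 ?_ ?_ ?_
          · push_cast
            rcases le_or_gt ((vx - ux) + (p:ℤ) * (vy - uy)) 0 with h | h
            · nlinarith [h, hK2, hP2]
            · nlinarith [hBnot, hK2, hP2, h,
                mul_nonneg (by linarith : (0:ℤ) ≤ (p:ℤ) - 1) (le_of_lt h),
                mul_nonneg hP21 (by linarith : (0:ℤ) ≤ (k:ℤ) - 2)]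
          · push_cast; nlinarith [h1a]
          · push_cast; nlinarith [hBnot]
      exact Set.mem_union_left _ (Set.mem_union_left _ hmem)
    · -- CASE 2b : A tight
      push_neg at h1a
      have hA2 : (p:ℤ) * ((k:ℤ) - 1) + 1 ≤ (p:ℤ)^2 * (vx - ux) + (vy - uy) :=
        Int.add_one_le_iff.mpr h1a
      have hdbneg : vy - uy ≤ -1 := by
        by_contra h
        push_neg at h
        have hdb0 : 0 ≤ vy - uy := by omega
        have h5 : (p:ℤ) * ((p:ℤ) * (vx - ux) + (p:ℤ)^2 * (vy - uy)) ≤ (p:ℤ) * ((k:ℤ) - 1) :=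
          mul_le_mul_of_nonneg_left hBnot hP0
        nlinarith [h5, hA2, mul_nonneg hdb0 hP31]
      have hda1 : 1 ≤ vx - ux := by
        by_contra h
        push_neg at h
        have hda0 : vx - ux ≤ 0 := by omega
        nlinarith [hA2, hP2, hK1, hdbneg, neg_factor (by positivity : (0:ℤ) ≤ (p:ℤ)^2) hda0]
      have hvx1 : 1 ≤ vx := by omega
      by_cases hkp2 : p ≤ k
      · -- 2b-i : k ≥ p, land in G_p with w = (vx-1, vy)
        have hKP : (p:ℤ) ≤ (k:ℤ) := by exact_mod_cast hkp2
        have hipn : i + p ≤ n := by omega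
        have hw : (((vx - 1 : ℤ):ℝ), (vy:ℝ)) ∈ J (i + p) := by
          by_cases hkp : k = p
          · rw [hkp] at hu hBnot hA
            have hBq0 : (vx - ux) + (p:ℤ) * (vy - uy) ≤ 0 := by
              by_contra h'
              push_neg at h'
              nlinarith [hBnot, h', hP2]
            refine idealstep (hJideal (i+p) (by omega) hipn) hu (by omega) (by omega) hv3 hv4 ?_ ?_
            · linarith
            · nlinarith [hA]
          · have hKP1 : (p:ℤ) + 1 ≤ (k:ℤ) := by
              have : p < k := by omega
              exact_mod_cast this
            refine step3 hbc hik hkn (by omega) hipn hu (by omega) (by omega) hv3 hv4 ?_ ?_ ?_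
            · push_cast
              rcases le_or_gt ((vx - ux) + (p:ℤ) * (vy - uy)) 0 with h | h
              · nlinarith [h, hKP1, hP2]
              · nlinarith [hBnot, hKP1, hP2, h,
                  mul_nonneg (by linarith : (0:ℤ) ≤ (p:ℤ) - 1) (le_of_lt h),
                  mul_nonneg hP21 (by linarith : (0:ℤ) ≤ (k:ℤ) - (p:ℤ))]
            · push_cast; nlinarith [hA]
            · push_cast; nlinarith [hBnot]
        refine Set.mem_union_left _ (Set.mem_union_right _ ⟨hipn, ?_, mem_box_iff.mpr ⟨hv1, hv2, hv3, hv4⟩⟩)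
        refine mem_add3_iff.mpr ⟨_, hw, ((0:ℝ), (0:ℝ)), ⟨by norm_num, by norm_num⟩, ?_⟩
        refine Prod.ext_iff.mpr ⟨?_, ?_⟩
        · show (vx:ℝ) = ((vx - 1 : ℤ):ℝ) + 0 + 1; push_cast; ring
        · show (vy:ℝ) = (vy:ℝ) + 0 + 0; ring
      · -- 2b-ii : k ≤ p - 1, land in G_α
        have hKP' : (k:ℤ) ≤ (p:ℤ) - 1 := by
          have : k < p := by omega
          have h' : (k:ℤ) < (p:ℤ) := by exact_mod_cast this
          omega
        set Q : ℕ → Prop := fun β => 1 ≤ β ∧ i + β ≤ n ∧ J (i + β) ≠ ∅ with hQdef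
        have hQk : Q k := ⟨hk1, hkn, Set.Nonempty.ne_empty ⟨_, hu⟩⟩
        obtain ⟨α, hαdef⟩ : ∃ a : ℕ, Nat.findGreatest Q (p - 1) = a := ⟨_, rfl⟩
        have hkα : k ≤ α := by rw [← hαdef]; exact Nat.le_findGreatest (by omega) hQk
        have hQα : Q α := by rw [← hαdef]; exact Nat.findGreatest_spec (m := k) (by omega) hQk
        have hαp : α ≤ p - 1 := by rw [← hαdef]; exact Nat.findGreatest_le _
        have hα1 : 1 ≤ α := le_trans hk1 hkα
        obtain ⟨-, hiαn, hJαne⟩ := hQα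
        have hmax : ∀ β : ℕ, (1 ≤ β ∧ β ≤ p - 1 ∧ i + β ≤ n ∧ J (i + β) ≠ ∅) → β ≤ α := by
          intro β hβ
          rw [← hαdef]
          exact Nat.le_findGreatest hβ.2.1 ⟨hβ.1, hβ.2.2.1, hβ.2.2.2⟩
        have hM0 : (k:ℤ) ≤ (α:ℤ) := by exact_mod_cast hkα
        have hαZ : (α:ℤ) ≤ (p:ℤ) - 1 := by
          have h1 : α < p := by omega
          have h2 : (α:ℤ) < (p:ℤ) := by exact_mod_cast h1
          omega
        -- Claim C
        have hC : (vx - ux) + (p:ℤ) * (vy - uy) ≤ 1 + (p:ℤ)^2 * (k:ℤ) - (p:ℤ)^3 := by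
          by_contra hC'
          push_neg at hC'
          have hC'' : 2 + (p:ℤ)^2 * (k:ℤ) - (p:ℤ)^3 ≤ (vx - ux) + (p:ℤ) * (vy - uy) := by
            linarith [Int.add_one_le_iff.mpr hC']
          have hdbub : vy - uy ≤ (p:ℤ) * (k:ℤ) - (p:ℤ)^2 := by
            have h4 : (p:ℤ)^2 * 1 ≤ (p:ℤ)^2 * (vx - ux) :=
              mul_le_mul_of_nonneg_left hda1 (by positivity)
            linarith [hA, h4]
          have h5 : ((p:ℤ)^3 - 1) * (vy - uy) ≤ ((p:ℤ)^3 - 1) * ((p:ℤ) * (k:ℤ) - (p:ℤ)^2) :=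
            mul_le_mul_of_nonneg_left hdbub hP31
          have h6 : (p:ℤ)^2 * (2 + (p:ℤ)^2 * (k:ℤ) - (p:ℤ)^3) ≤
              (p:ℤ)^2 * ((vx - ux) + (p:ℤ) * (vy - uy)) :=
            mul_le_mul_of_nonneg_left hC'' (by positivity)
          linarith [h5, h6, hA, (show (0:ℤ) < (p:ℤ)^2 by positivity)]
        -- Claim W
        have hW : (p:ℤ) * ((α:ℤ) - (k:ℤ)) ≤ uy := by
          by_contra hW'
          push_neg at hW'
          have hdblb : 1 - (p:ℤ) * ((α:ℤ) - (k:ℤ)) ≤ vy - uy := by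
            linarith [Int.add_one_le_iff.mpr hW', hv3]
          have h7 : (p:ℤ) * (1 - (p:ℤ) * ((α:ℤ) - (k:ℤ))) ≤ (p:ℤ) * (vy - uy) :=
            mul_le_mul_of_nonneg_left hdblb hP0
          have h8 : (p:ℤ)^2 * ((α:ℤ) - (p:ℤ)) ≤ (p:ℤ)^2 * (-1) :=
            mul_le_mul_of_nonneg_left (by omega) (by positivity)
          linarith [hC, h7, h8, hda1, hP2, (show (0:ℤ) ≤ (p:ℤ)^2 by positivity)]
        have hPM0 : 0 ≤ (p:ℤ) * ((α:ℤ) - (k:ℤ)) := mul_nonneg hP0 (by omega)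
        have hw : ((ux:ℝ), ((uy - (p:ℤ) * ((α:ℤ) - (k:ℤ)) : ℤ):ℝ)) ∈ J (i + α) := by
          by_cases hmk : α = k
          · have hM0' : (α:ℤ) - (k:ℤ) = 0 := by rw [hmk]; ring
            rw [hM0']
            have huy' : uy - (p:ℤ) * 0 = uy := by ring
            rw [huy', hmk]
            exact hu
          · refine step3 hbc hik hkn (by omega) hiαn hu hux0 huxn
              (by linarith [hW]) (by linarith [hPM0, huyn]) ?_ ?_ ?_
            · push_cast
              have heq0 : (ux - ux) + (p:ℤ) * ((uy - (p:ℤ) * ((α:ℤ) - (k:ℤ))) - uy) +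
                  (p:ℤ)^2 * (((i:ℤ) + (α:ℤ)) - ((i:ℤ) + (k:ℤ))) = 0 := by ring
              linarith [heq0]
            · push_cast
              have heq0 : (p:ℤ)^2 * (ux - ux) + ((uy - (p:ℤ) * ((α:ℤ) - (k:ℤ))) - uy) +
                  (p:ℤ) * (((i:ℤ) + (α:ℤ)) - ((i:ℤ) + (k:ℤ))) = 0 := by ring
              linarith [heq0]
            · push_cast
              have heq0 : (p:ℤ) * (ux - ux) + (p:ℤ)^2 * ((uy - (p:ℤ) * ((α:ℤ) - (k:ℤ))) - uy) +
                  (((i:ℤ) + (α:ℤ)) - ((i:ℤ) + (k:ℤ))) = ((α:ℤ) - (k:ℤ)) * (1 - (p:ℤ)^3) := by ring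
              rw [heq0]
              exact neg_factor (by omega) (by linarith)
        refine Set.mem_union_right _ ⟨α, ⟨⟨hα1, hαp, hiαn, hJαne⟩, hmax⟩, ?_,
          mem_box_iff.mpr ⟨hv1, hv2, hv3, hv4⟩⟩
        refine mem_add3_iff.mpr ⟨_, hw,
          (((vx - ux - 1 : ℤ):ℝ), ((vy - uy - (p:ℤ) * (k:ℤ) + (p:ℤ)^2 : ℤ):ℝ)), ?_, ?_⟩
        · refine mem_D2_iff.mpr ⟨by nlinarith [hC], by nlinarith [hA]⟩
        · refine Prod.ext_iff.mpr ⟨?_, ?_⟩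
          · show (vx:ℝ) = (ux:ℝ) + ((vx - ux - 1 : ℤ):ℝ) + 1
            push_cast; ring
          · show (vy:ℝ) = ((uy - (p:ℤ) * ((α:ℤ) - (k:ℤ)) : ℤ):ℝ) +
                ((vy - uy - (p:ℤ) * (k:ℤ) + (p:ℤ)^2 : ℤ):ℝ) + (-(p:ℝ)^2 + (p:ℝ) * (α:ℝ))
            push_cast; ring

end Stmt13Aux

namespace Stmt13Aux

set_option maxHeartbeats 2000000 in
lemma liftup {p n i : ℕ} (hp2 : 2 ≤ p) {J : ℕ → Set (ℝ × ℝ)} {J' : Set (ℝ × ℝ)}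
    (hbc : IsIdeal3 p (slab (box 0 n 0 n) {j | i < j ∧ j ≤ n})
      (stack J {j | i < j ∧ j ≤ n}))
    (hd1 : ∀ ux uy vx vy : ℤ, ((ux:ℝ), (uy:ℝ)) ∈ J' →
      0 ≤ vx → vx ≤ (n:ℤ) → 0 ≤ vy → vy ≤ (n:ℤ) →
      (vx - ux) + (p:ℤ) * (vy - uy) + (p:ℤ)^2 ≤ 0 →
      (p:ℤ)^2 * (vx - ux) + (vy - uy) + (p:ℤ) ≤ 0 →
      ((vx:ℝ), (vy:ℝ)) ∈ J (i + 1)) :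
    ∀ k : ℕ, 1 ≤ k → i + k ≤ n → ∀ ux uy vx vy : ℤ,
      ((ux:ℝ), (uy:ℝ)) ∈ J' → 0 ≤ ux → ux ≤ (n:ℤ) → 0 ≤ uy → uy ≤ (n:ℤ) →
      0 ≤ vx → vx ≤ (n:ℤ) → 0 ≤ vy → vy ≤ (n:ℤ) →
      (vx - ux) + (p:ℤ) * (vy - uy) + (p:ℤ)^2 * (k:ℤ) ≤ 0 →
      (p:ℤ)^2 * (vx - ux) + (vy - uy) + (p:ℤ) * (k:ℤ) ≤ 0 →
      ((vx:ℝ), (vy:ℝ)) ∈ J (i + k) := by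
  have hP2 : (2:ℤ) ≤ (p:ℤ) := by exact_mod_cast hp2
  have hP0 : (0:ℤ) ≤ (p:ℤ) := by linarith
  have hP31 : (0:ℤ) ≤ (p:ℤ)^3 - 1 := by
    have h := pow_le_pow_left₀ (by norm_num : (0:ℤ) ≤ 2) hP2 3
    norm_num at h
    linarith
  intro k hk1
  induction k, hk1 using Nat.le_induction with
  | base =>
    intro hkn ux uy vx vy hu hu1 hu2 hu3 hu4 hv1 hv2 hv3 hv4 L1 L2
    have hc1 : ((1:ℕ):ℤ) = 1 := by norm_num
    rw [hc1] at L1 L2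
    exact hd1 ux uy vx vy hu hv1 hv2 hv3 hv4 (by linarith) (by linarith)
  | succ k hk1 IH =>
    intro hkn ux uy vx vy hu hu1 hu2 hu3 hu4 hv1 hv2 hv3 hv4 L1 L2
    push_cast at L1 L2
    have hK0 : (0:ℤ) ≤ (k:ℤ) := by positivity
    have hK1 : (1:ℤ) ≤ (k:ℤ) := by exact_mod_cast hk1
    rcases le_or_gt (vy + (p:ℤ)) (n:ℤ) with hcase | hcase
    · -- intermediate point w = (vx, vy + p) at level i + k
      have hw : ((vx:ℝ), ((vy + (p:ℤ) : ℤ):ℝ)) ∈ J (i + k) := by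
        refine IH (by omega) ux uy vx (vy + (p:ℤ)) hu hu1 hu2 hu3 hu4 hv1 hv2
          (by linarith) hcase ?_ ?_
        · linarith [L1]
        · linarith [L2]
      refine step3 hbc (show i < i + k by omega) (show i + k ≤ n by omega)
        (show i < i + k + 1 by omega) (show i + k + 1 ≤ n by omega) hw
        hv1 hv2 hv3 hv4 ?_ ?_ ?_
      · push_cast; linarith
      · push_cast; linarith
      · push_cast; linarith [hP31]
    · -- boundary case : w = (vx + p * t₀, n) with t₀ = vy + p - n
      have ht1 : 1 ≤ vy + (p:ℤ) - n := by omega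
      have ht0 : 0 ≤ vy + (p:ℤ) - n := by omega
      have htdb : vy + (p:ℤ) - n ≤ (vy - uy) + p := by linarith
      have h9 : (p:ℤ)^2 * (vx - ux) ≤ (p:ℤ)^2 * (-((p:ℤ) * (vy - uy)) - (p:ℤ)^2 * ((k:ℤ)+1)) :=
        mul_le_mul_of_nonneg_left (by linarith [L1]) (by positivity)
      have h11 : ((p:ℤ)^3 - 1) * (vy + (p:ℤ) - n) ≤ ((p:ℤ)^3 - 1) * ((vy - uy) + p) :=
        mul_le_mul_of_nonneg_left htdb hP31
      have h12 : 0 ≤ ((p:ℤ)^4 - (p:ℤ)) * (k:ℤ) := by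
        refine mul_nonneg ?_ hK0
        have h := pow_le_pow_left₀ (by norm_num : (0:ℤ) ≤ 2) hP2 4
        norm_num at h
        nlinarith [hP2]
      have hwxux : vx + (p:ℤ) * (vy + (p:ℤ) - n) ≤ ux := by
        have h13 : (p:ℤ) * (vy + (p:ℤ) - n) ≤ (p:ℤ) * ((vy - uy) + p) :=
          mul_le_mul_of_nonneg_left htdb hP0
        have h14 : 0 ≤ (p:ℤ)^2 * (k:ℤ) := mul_nonneg (by positivity) hK0
        linarith [L1, h13, h14]
      have hpt0 : 0 ≤ (p:ℤ) * (vy + (p:ℤ) - n) := mul_nonneg hP0 ht0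
      have hn0 : (0:ℤ) ≤ (n:ℤ) := by positivity
      have hw : (((vx + (p:ℤ) * (vy + (p:ℤ) - n) : ℤ):ℝ), ((n:ℤ):ℝ)) ∈ J (i + k) := by
        refine IH (by omega) ux uy _ _ hu hu1 hu2 hu3 hu4 (by linarith)
          (by linarith) hn0 le_rfl ?_ ?_
        · linarith [L1]
        · linarith [h9, h11, h12]
      refine step3 hbc (show i < i + k by omega) (show i + k ≤ n by omega)
        (show i < i + k + 1 by omega) (show i + k + 1 ≤ n by omega) hw
        hv1 hv2 hv3 hv4 ?_ ?_ ?_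
      · push_cast; linarith
      · push_cast
        have h15 : 0 ≤ ((p:ℤ)^3 - 1) * (vy + (p:ℤ) - n) := mul_nonneg hP31 ht0
        linarith [h15]
      · push_cast; linarith [hP31]

end Stmt13Aux

open Stmt13Aux in
set_option maxHeartbeats 2000000 in
/-- Corollary 4.7 (backward slicing). -/
theorem stmt13 (p m n i : ℕ) (hp : p.Prime) (hm : 0 < m) (h3 : 3 ∣ m)
    (hn : n = m / 3 * (p - 1)) (hi : i < n)
    (U : Set (ℝ × ℝ)) (hU : U = box 0 n 0 n)
    (J : ℕ → Set (ℝ × ℝ))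
    (hJideal : ∀ j, i < j → j ≤ n → IsIdeal2 p U (J j))
    (hbc : IsIdeal3 p (slab U {j | i < j ∧ j ≤ n}) (stack J {j | i < j ∧ j ≤ n}))
    (X Y : Set (ℝ × ℝ))
    (hX : X = J (i + 1) ∪
        {w | i + p ≤ n ∧ w ∈ (J (i + p) + D2 p + {((1 : ℝ), (0 : ℝ))}) ∩ U} ∪
        {w | ∃ α : ℕ,
          ((1 ≤ α ∧ α ≤ p - 1 ∧ i + α ≤ n ∧ J (i + α) ≠ ∅) ∧
            ∀ β : ℕ, (1 ≤ β ∧ β ≤ p - 1 ∧ i + β ≤ n ∧ J (i + β) ≠ ∅) → β ≤ α) ∧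
          w ∈ (J (i + α) + D2 p +
              {((1 : ℝ), -(p : ℝ) ^ 2 + (p : ℝ) * (α : ℝ))}) ∩ U})
    (hY : Y = ⋃₀ {K | IsIdeal2 p U K ∧
        (K + D2 p - {((0 : ℝ), (p : ℝ))}) ∩ U ⊆ J (i + 1)}) :
    IsIdeal2 p U X ∧ IsIdeal2 p U Y ∧
      ∀ J' : Set (ℝ × ℝ), IsIdeal2 p U J' →
        (IsIdeal3 p (slab U {j | i ≤ j ∧ j ≤ n})
            (stack (Function.update J i J') {j | i ≤ j ∧ j ≤ n}) ↔
          X ⊆ J' ∧ J' ⊆ Y) := by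
  subst hU hX hY
  have hp2 : 2 ≤ p := hp.two_le
  have hpR : (2:ℝ) ≤ (p:ℝ) := by exact_mod_cast hp2
  have hp0R : (0:ℝ) ≤ (p:ℝ) := by linarith
  have hp3R : (1:ℝ) ≤ (p:ℝ)^3 := by
    have h := pow_le_pow_left₀ (by norm_num : (0:ℝ) ≤ 2) hpR 3
    norm_num at h
    linarith
  have hi1n : i + 1 ≤ n := by omega
  have hJ1 : IsIdeal2 p (box 0 n 0 n) (J (i+1)) := hJideal (i+1) (by omega) hi1n
  refine ⟨?_, ?_, ?_⟩
  · -- X is an ideal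
    constructor
    · rintro w ((h | h) | ⟨α, hc, hmem⟩)
      · exact hJ1.1 h
      · exact h.2.2
      · exact hmem.2
    · rintro u ((h | h) | h) v hv hprec
      · exact Set.mem_union_left _ (Set.mem_union_left _ (hJ1.2 u h v hv hprec))
      · obtain ⟨hipn, hsum, hbox⟩ := h
        obtain ⟨w, hw, d, hd, hueq⟩ := mem_add3_iff.mp hsum
        refine Set.mem_union_left _ (Set.mem_union_right _ ⟨hipn, ?_, hv⟩)
        exact mem_add3_iff.mpr ⟨w, hw, d + (v - u), D2_add hd hprec, by rw [hueq] at *; abel⟩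
      · obtain ⟨α, hcond, hsum, hbox⟩ := h
        obtain ⟨w, hw, d, hd, hueq⟩ := mem_add3_iff.mp hsum
        refine Set.mem_union_right _ ⟨α, hcond, ?_, hv⟩
        exact mem_add3_iff.mpr ⟨w, hw, d + (v - u), D2_add hd hprec, by rw [hueq] at *; abel⟩
  · -- Y is an ideal
    constructor
    · rintro w ⟨K, ⟨hKid, -⟩, hwK⟩
      exact hKid.1 hwK
    · rintro u ⟨K, hK, huK⟩ v hv hprec
      exact ⟨K, hK, hK.1.2 u huK v hv hprec⟩
  · intro J' hJ'
    constructor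
    · -- ideal3 → X ⊆ J' ∧ J' ⊆ Y
      intro Hid
      have extract : ∀ (a : ℝ × ℝ) (j₀ : ℕ), (a.1, a.2, ((j₀:ℕ):ℝ)) ∈
          stack (Function.update J i J') {j | i ≤ j ∧ j ≤ n} →
          a ∈ Function.update J i J' j₀ := by
        rintro a j₀ ⟨j₁, hj₁, hmem, hz⟩
        have hz' : ((j₀:ℕ):ℝ) = ((j₁:ℕ):ℝ) := hz
        have : j₀ = j₁ := by exact_mod_cast hz'
        subst this
        simpa using hmem
      constructor
      · -- X ⊆ J'
        rintro v ((h | h) | h)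
        · -- v ∈ J (i+1)
          have hvU : v ∈ box 0 (n:ℤ) 0 (n:ℤ) := hJ1.1 h
          have hv' : (v.1, v.2, ((i:ℕ):ℝ)) ∈ stack (Function.update J i J') {j | i ≤ j ∧ j ≤ n} := by
            refine Hid.2 (v.1, v.2, (((i+1:ℕ)):ℝ)) ⟨i+1, ⟨by omega, hi1n⟩, ?_, rfl⟩
              _ ⟨by simpa using hvU, i, ⟨le_rfl, by omega⟩, rfl⟩ ?_
            · rw [Function.update_of_ne (by omega : i + 1 ≠ i)]
              simpa using h
            · refine ⟨?_, ?_, ?_⟩ <;>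
              · show _ ≤ (0:ℝ)
                push_cast
                nlinarith [hpR]
          have := extract v i hv'
          rwa [Function.update_self] at this
        · -- v ∈ G_p
          obtain ⟨hipn, hsum, hbox⟩ := h
          obtain ⟨w, hw, d, hd, hveq⟩ := mem_add3_iff.mp hsum
          have h1 : v.1 = w.1 + d.1 + 1 := by rw [hveq]; rfl
          have h2 : v.2 = w.2 + d.2 + 0 := by rw [hveq]; rfl
          obtain ⟨hd1, hd2⟩ := hd
          have hv' : (v.1, v.2, ((i:ℕ):ℝ)) ∈ stack (Function.update J i J') {j | i ≤ j ∧ j ≤ n} := by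
            refine Hid.2 (w.1, w.2, (((i+p:ℕ)):ℝ)) ⟨i+p, ⟨by omega, hipn⟩, ?_, rfl⟩
              _ ⟨by simpa using hbox, i, ⟨le_rfl, by omega⟩, rfl⟩ ?_
            · rw [Function.update_of_ne (by omega : i + p ≠ i)]
              simpa using hw
            · refine ⟨?_, ?_, ?_⟩
              · show (v.1 - w.1) + (p:ℝ) * (v.2 - w.2) + (p:ℝ)^2 * (((i:ℕ):ℝ) - ((i+p:ℕ):ℝ)) ≤ 0
                rw [h1, h2]; push_cast; nlinarith [hd1, hpR]
              · show (p:ℝ)^2 * (v.1 - w.1) + (v.2 - w.2) + (p:ℝ) * (((i:ℕ):ℝ) - ((i+p:ℕ):ℝ)) ≤ 0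
                rw [h1, h2]; push_cast; nlinarith [hd2]
              · show (p:ℝ) * (v.1 - w.1) + (p:ℝ)^2 * (v.2 - w.2) + (((i:ℕ):ℝ) - ((i+p:ℕ):ℝ)) ≤ 0
                rw [h1, h2]; push_cast
                nlinarith [mul_nonpos_of_nonneg_of_nonpos hp0R hd1, hpR]
          have := extract v i hv'
          rwa [Function.update_self] at this
        · -- v ∈ G_α
          obtain ⟨α, ⟨⟨hα1, hαp, hiαn, hJαne⟩, hmax⟩, hsum, hbox⟩ := h
          obtain ⟨w, hw, d, hd, hveq⟩ := mem_add3_iff.mp hsum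
          have h1 : v.1 = w.1 + d.1 + 1 := by rw [hveq]; rfl
          have h2 : v.2 = w.2 + d.2 + (-(p:ℝ)^2 + (p:ℝ) * (α:ℝ)) := by rw [hveq]; rfl
          obtain ⟨hd1, hd2⟩ := hd
          have hαpR : (α:ℝ) ≤ (p:ℝ) := by
            have : α ≤ p := by omega
            exact_mod_cast this
          have hv' : (v.1, v.2, ((i:ℕ):ℝ)) ∈ stack (Function.update J i J') {j | i ≤ j ∧ j ≤ n} := by
            refine Hid.2 (w.1, w.2, (((i+α:ℕ)):ℝ)) ⟨i+α, ⟨by omega, hiαn⟩, ?_, rfl⟩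
              _ ⟨by simpa using hbox, i, ⟨le_rfl, by omega⟩, rfl⟩ ?_
            · rw [Function.update_of_ne (by omega : i + α ≠ i)]
              simpa using hw
            · have hmul : ((p:ℝ)^3 - 1) * (α:ℝ) ≤ ((p:ℝ)^3 - 1) * (p:ℝ) :=
                mul_le_mul_of_nonneg_left hαpR (by nlinarith)
              have hpd : (p:ℝ) * (d.1 + (p:ℝ) * d.2) ≤ 0 :=
                mul_nonpos_of_nonneg_of_nonpos hp0R hd1
              refine ⟨?_, ?_, ?_⟩
              · show (v.1 - w.1) + (p:ℝ) * (v.2 - w.2) + (p:ℝ)^2 * (((i:ℕ):ℝ) - ((i+α:ℕ):ℝ)) ≤ 0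
                rw [h1, h2]; push_cast; nlinarith [hd1, hpR]
              · show (p:ℝ)^2 * (v.1 - w.1) + (v.2 - w.2) + (p:ℝ) * (((i:ℕ):ℝ) - ((i+α:ℕ):ℝ)) ≤ 0
                rw [h1, h2]; push_cast; nlinarith [hd2]
              · show (p:ℝ) * (v.1 - w.1) + (p:ℝ)^2 * (v.2 - w.2) + (((i:ℕ):ℝ) - ((i+α:ℕ):ℝ)) ≤ 0
                rw [h1, h2]; push_cast
                linarith [hmul, hpd]
          have := extract v i hv'
          rwa [Function.update_self] at this
      · -- J' ⊆ Y
        intro u hu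
        refine ⟨J', ⟨hJ', ?_⟩, hu⟩
        rintro v ⟨hvsum, hvU⟩
        obtain ⟨a, ha, hveq⟩ := mem_sub_singleton_iff.mp hvsum
        obtain ⟨w, hw, d, hd, haeq⟩ := Set.mem_add.mp ha
        subst haeq
        obtain ⟨hd1, hd2⟩ := hd
        have h1 : v.1 = w.1 + d.1 - 0 := by rw [hveq]; rfl
        have h2 : v.2 = w.2 + d.2 - (p:ℝ) := by rw [hveq]; rfl
        have hv' : (v.1, v.2, (((i+1:ℕ)):ℝ)) ∈
            stack (Function.update J i J') {j | i ≤ j ∧ j ≤ n} := by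
          refine Hid.2 (w.1, w.2, ((i:ℕ):ℝ)) ⟨i, ⟨le_rfl, by omega⟩, ?_, rfl⟩
            _ ⟨by simpa using hvU, i+1, ⟨by omega, hi1n⟩, rfl⟩ ?_
          · rw [Function.update_self]
            simpa using hw
          · refine ⟨?_, ?_, ?_⟩
            · show (v.1 - w.1) + (p:ℝ) * (v.2 - w.2) + (p:ℝ)^2 * (((i+1:ℕ):ℝ) - ((i:ℕ):ℝ)) ≤ 0
              rw [h1, h2]; push_cast; nlinarith [hd1]
            · show (p:ℝ)^2 * (v.1 - w.1) + (v.2 - w.2) + (p:ℝ) * (((i+1:ℕ):ℝ) - ((i:ℕ):ℝ)) ≤ 0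
              rw [h1, h2]; push_cast; nlinarith [hd2]
            · show (p:ℝ) * (v.1 - w.1) + (p:ℝ)^2 * (v.2 - w.2) + (((i+1:ℕ):ℝ) - ((i:ℕ):ℝ)) ≤ 0
              rw [h1, h2]; push_cast
              nlinarith [mul_nonpos_of_nonneg_of_nonpos hp0R hd1, hp3R]
        rcases hv' with ⟨j₁, hj₁, hmem, hz⟩
        have hz' : ((i+1:ℕ):ℝ) = ((j₁:ℕ):ℝ) := hz
        have hji : i + 1 = j₁ := by exact_mod_cast hz'
        subst hji
        rw [Function.update_of_ne (by omega : i + 1 ≠ i)] at hmem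
        simpa using hmem
    · -- X ⊆ J' ∧ J' ⊆ Y → ideal3
      rintro ⟨hXJ', hJ'Y⟩
      constructor
      · -- stack ⊆ slab
        rintro w ⟨j, ⟨hij, hjn⟩, hmem, hz⟩
        refine ⟨?_, j, ⟨hij, hjn⟩, hz⟩
        by_cases hji : j = i
        · subst hji
          rw [Function.update_self] at hmem
          exact hJ'.1 hmem
        · rw [Function.update_of_ne hji] at hmem
          exact (hJideal j (by omega) hjn).1 hmem
      · -- the order-ideal property
        intro u' hu' v' hv' hprec
        obtain ⟨j, ⟨hij, hjn⟩, humem, huz⟩ := hu'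
        obtain ⟨hvU, j', ⟨hij', hj'n⟩, hvz⟩ := hv'
        have huU : (u'.1, u'.2.1) ∈ box 0 (n:ℤ) 0 (n:ℤ) := by
          by_cases hji : j = i
          · subst hji; rw [Function.update_self] at humem; exact hJ'.1 humem
          · rw [Function.update_of_ne hji] at humem
            exact (hJideal j (by omega) hjn).1 humem
        obtain ⟨ax, ay, hua, hax0, haxn, hay0, hayn⟩ := huU
        obtain ⟨bx, by', hvb, hbx0, hbxn, hby0, hbyn⟩ := hvU
        have eu1 : u'.1 = (ax:ℝ) := congrArg Prod.fst hua
        have eu2 : u'.2.1 = (ay:ℝ) := congrArg Prod.snd hua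
        have ev1 : v'.1 = (bx:ℝ) := congrArg Prod.fst hvb
        have ev2 : v'.2.1 = (by':ℝ) := congrArg Prod.snd hvb
        obtain ⟨P1, P2, P3⟩ := hprec
        rw [eu1, eu2, ev1, ev2, huz, hvz] at P1 P2 P3
        have L1 : (bx - ax) + (p:ℤ) * (by' - ay) + (p:ℤ)^2 * ((j':ℤ) - (j:ℤ)) ≤ 0 := by
          exact_mod_cast P1
        have L2 : (p:ℤ)^2 * (bx - ax) + (by' - ay) + (p:ℤ) * ((j':ℤ) - (j:ℤ)) ≤ 0 := by
          exact_mod_cast P2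
        have L3 : (p:ℤ) * (bx - ax) + (p:ℤ)^2 * (by' - ay) + ((j':ℤ) - (j:ℤ)) ≤ 0 := by
          exact_mod_cast P3
        by_cases hji : j = i
        · rw [hji] at humem L1 L2 L3
          rw [Function.update_self] at humem
          have humem' : ((ax:ℝ), (ay:ℝ)) ∈ J' := by rwa [hua] at humem
          by_cases hj'i : j' = i
          · -- same level i
            rw [hj'i] at hvz L1 L2 L3
            have hv'm : ((bx:ℝ), (by':ℝ)) ∈ J' := by
              refine idealstep hJ' humem' hbx0 hbxn hby0 hbyn ?_ ?_
              · linarith [L1]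
              · linarith [L2]
            exact ⟨i, ⟨le_rfl, by omega⟩, by rw [hvb, Function.update_self]; exact hv'm, hvz⟩
          · -- u at level i, v above : liftup
            have hik' : i < j' := by
              rcases Nat.lt_or_ge i j' with h | h
              · exact h
              · exfalso; exact hj'i (by omega)
            have hd1 : ∀ ux uy vx vy : ℤ, ((ux:ℝ), (uy:ℝ)) ∈ J' →
                0 ≤ vx → vx ≤ (n:ℤ) → 0 ≤ vy → vy ≤ (n:ℤ) →
                (vx - ux) + (p:ℤ) * (vy - uy) + (p:ℤ)^2 ≤ 0 →
                (p:ℤ)^2 * (vx - ux) + (vy - uy) + (p:ℤ) ≤ 0 →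
                ((vx:ℝ), (vy:ℝ)) ∈ J (i + 1) := by
              intro ux uy vx vy hu0 hvv1 hvv2 hvv3 hvv4 M1 M2
              obtain ⟨K, ⟨hKid, hKsub⟩, huK⟩ := hJ'Y hu0
              refine hKsub ⟨?_, mem_box_iff.mpr ⟨hvv1, hvv2, hvv3, hvv4⟩⟩
              refine mem_sub_singleton_iff.mpr ⟨((ux:ℝ), (uy:ℝ)) +
                (((vx - ux : ℤ):ℝ), ((vy - uy + (p:ℤ) : ℤ):ℝ)), Set.add_mem_add huK ?_, ?_⟩
              · refine mem_D2_iff.mpr ⟨by linarith, by linarith⟩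
              · refine Prod.ext_iff.mpr ⟨?_, ?_⟩
                · show (vx:ℝ) = (ux:ℝ) + ((vx - ux : ℤ):ℝ) - 0
                  push_cast; ring
                · show (vy:ℝ) = (uy:ℝ) + ((vy - uy + (p:ℤ) : ℤ):ℝ) - (p:ℝ)
                  push_cast; ring
            have hk1 : 1 ≤ j' - i := by omega
            have hkn' : i + (j' - i) ≤ n := by omega
            have hcast : ((j' - i : ℕ):ℤ) = (j':ℤ) - (i:ℤ) := by omega
            have hv'm : ((bx:ℝ), (by':ℝ)) ∈ J (i + (j' - i)) := by
              refine liftup hp2 hbc hd1 (j' - i) hk1 hkn' ax ay bx by' humem'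
                hax0 haxn hay0 hayn hbx0 hbxn hby0 hbyn ?_ ?_
              · rw [hcast]; linarith [L1]
              · rw [hcast]; linarith [L2]
            have hji' : i + (j' - i) = j' := by omega
            rw [hji'] at hv'm
            refine ⟨j', ⟨hij', hj'n⟩, ?_, hvz⟩
            rw [hvb, Function.update_of_ne hj'i]
            exact hv'm
        · -- u at level j > i
          have hij2 : i < j := by omega
          rw [Function.update_of_ne hji] at humem
          have humem' : ((ax:ℝ), (ay:ℝ)) ∈ J j := by rwa [hua] at humem
          by_cases hj'i : j' = i
          · -- forcing down to level i : use `forced` and X ⊆ J'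
            rw [hj'i] at hvz L1 L2 L3
            have hk1 : 1 ≤ j - i := by omega
            have hkn' : i + (j - i) ≤ n := by omega
            have hcast : ((j - i : ℕ):ℤ) = (j:ℤ) - (i:ℤ) := by omega
            have humem'' : ((ax:ℝ), (ay:ℝ)) ∈ J (i + (j - i)) := by
              have heq : i + (j - i) = j := by omega
              rw [heq]; exact humem'
            have hvX := forced hp2 hJideal hbc (j - i) hk1 hkn' ax ay bx by' humem''
              hbx0 hbxn hby0 hbyn (by rw [hcast]; linarith [L2]) (by rw [hcast]; linarith [L3])
            have hv'm : ((bx:ℝ), (by':ℝ)) ∈ J' := hXJ' hvX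
            exact ⟨i, ⟨le_rfl, by omega⟩, by rw [hvb, Function.update_self]; exact hv'm, hvz⟩
          · -- both levels above i : use hbc
            have hij2' : i < j' := by omega
            have hvU' : (v'.1, v'.2.1) ∈ box 0 (n:ℤ) 0 (n:ℤ) := by
              rw [hvb]; exact mem_box_iff.mpr ⟨hbx0, hbxn, hby0, hbyn⟩
            have hv'' : v' ∈ stack J {j | i < j ∧ j ≤ n} := by
              refine hbc.2 u' ⟨j, ⟨hij2, hjn⟩, ?_, huz⟩ v'
                ⟨hvU', j', ⟨hij2', hj'n⟩, hvz⟩ ?_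
              · exact humem
              · refine ⟨?_, ?_, ?_⟩ <;> rw [eu1, eu2, ev1, ev2, huz, hvz]
                · exact_mod_cast L1
                · exact_mod_cast L2
                · exact_mod_cast L3
            obtain ⟨j₂, ⟨hij₂, hj₂n⟩, hmem₂, hz₂⟩ := hv''
            exact ⟨j₂, ⟨by omega, hj₂n⟩, by
              rw [Function.update_of_ne (by omega : j₂ ≠ i)]; exact hmem₂, hz₂⟩
end
end

section
/- Let 1 ≤ i ≤ n, let J₀,…,J_{i−1} be a consistent sequence (J_j a symmetric ideal of [0,j]²), with associated ideals J_{i,j} of [0,i−1]² (0 ≤ j < i), and let J_i be an ideal of [0,i]². Then J_i is consistent with J₀,…,J_{i−1} if and only if the following five conditions hold: (1) {x : (x,i) ∈ J_i} = {y : (i,y) ∈ J_i}; (2) (J_i×{i} + Δ) ∩ ([0,i−1]² × {j}) ⊆ J_{i,j} × {j} for all 0 ≤ j < i; (3) (J_{i,j}×{j} + Δ) ∩ V_i ⊆ J_i × {i} for all 0 ≤ j < i; (4) (J_i×{i} + Δ) ∩ V_i^A ⊆ (J_i×{i})^A; (5) (J_i×{i} + Δ) ∩ V_i^{A²} ⊆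 (J_i×{i})^{A²}. -/
open Pointwise

noncomputable section

/-- `S × {j} ⊆ ℝ³`. -/
def prodLayer (S : Set (ℝ × ℝ)) (j : ℕ) : Set (ℝ × ℝ × ℝ) :=
  {w | (w.1, w.2.1) ∈ S ∧ w.2.2 = (j : ℝ)}

/-- The action `A : (x,y,z) ↦ (y,z,x)`. -/
def Arot : ℝ × ℝ × ℝ → ℝ × ℝ × ℝ := fun w => (w.2.1, w.2.2, w.1)

/-- `⋃_{j ∈ s} [(J j × {j}) ∪ (J j × {j})^A ∪ (J j × {j})^{A²}]`. -/
def orbitU (J : ℕ → Set (ℝ × ℝ)) (s : Set ℕ) : Set (ℝ × ℝ × ℝ) :=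
  (⋃ j ∈ s, prodLayer (J j) j) ∪ Arot '' (⋃ j ∈ s, prodLayer (J j) j) ∪
    Arot '' (Arot '' (⋃ j ∈ s, prodLayer (J j) j))

/-- The integer cube `[0,i]³` inside `ℝ³`. -/
def cube (i : ℤ) : Set (ℝ × ℝ × ℝ) :=
  {w | ∃ x y z : ℤ, w = ((x : ℝ), (y : ℝ), (z : ℝ)) ∧
    0 ≤ x ∧ x ≤ i ∧ 0 ≤ y ∧ y ≤ i ∧ 0 ≤ z ∧ z ≤ i}

/-- `V_i = [0,i]² × {i}`. -/
def Vset (i : ℕ) : Set (ℝ × ℝ × ℝ) := prodLayer (box 0 (i : ℤ) 0 (i : ℤ)) i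

/-- A symmetric ideal of `[0,i]²`. -/
def Symm (i : ℕ) (J : Set (ℝ × ℝ)) : Prop :=
  {x : ℝ | (x, (i : ℝ)) ∈ J} = {y : ℝ | ((i : ℝ), y) ∈ J}

section Aux

lemma arot3 (w : ℝ × ℝ × ℝ) : Arot (Arot (Arot w)) = w := rfl

lemma prec3_arot {p : ℕ} {u v : ℝ × ℝ × ℝ} : prec3 p (Arot u) (Arot v) ↔ prec3 p u v := by
  constructor <;> rintro ⟨h1, h2, h3⟩ <;>
    exact ⟨by simp only [Arot] at *; linarith, by simp only [Arot] at *; linarith,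
      by simp only [Arot] at *; linarith⟩

lemma prec3_sub {p : ℕ} {u v : ℝ × ℝ × ℝ} : u - v ∈ Delta3 p ↔ prec3 p u v := by
  simp only [Delta3, prec3, Set.mem_setOf_eq, Prod.fst_sub, Prod.snd_sub, Prod.fst_zero,
    Prod.snd_zero, sub_zero]

lemma mem_add_delta {p : ℕ} {S : Set (ℝ × ℝ × ℝ)} {v : ℝ × ℝ × ℝ} :
    v ∈ S + Delta3 p ↔ ∃ u ∈ S, prec3 p v u := by
  rw [Set.mem_add]
  constructor
  · rintro ⟨a, ha, b, hb, rfl⟩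
    refine ⟨a, ha, prec3_sub.mp ?_⟩
    simpa using hb
  · rintro ⟨u, hu, h⟩
    exact ⟨u, hu, v - u, prec3_sub.mpr h, by abel⟩

lemma mem_arot_image {T : Set (ℝ × ℝ × ℝ)} {w : ℝ × ℝ × ℝ} :
    w ∈ Arot '' T ↔ (w.2.2, w.1, w.2.1) ∈ T := by
  constructor
  · rintro ⟨u, hu, rfl⟩; exact hu
  · intro h; exact ⟨(w.2.2, w.1, w.2.1), h, rfl⟩

lemma mem_arot2_image {T : Set (ℝ × ℝ × ℝ)} {w : ℝ × ℝ × ℝ} :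
    w ∈ Arot '' (Arot '' T) ↔ (w.2.1, w.2.2, w.1) ∈ T := by
  rw [mem_arot_image, mem_arot_image]

lemma cube_mono {a b : ℤ} (h : a ≤ b) : cube a ⊆ cube b := by
  rintro w ⟨x, y, z, rfl, h1, h2, h3, h4, h5, h6⟩
  exact ⟨x, y, z, rfl, h1, h2.trans h, h3, h4.trans h, h5, h6.trans h⟩

lemma arot_mem_cube {a : ℤ} {w : ℝ × ℝ × ℝ} (h : w ∈ cube a) : Arot w ∈ cube a := by
  obtain ⟨x, y, z, rfl, h1, h2, h3, h4, h5, h6⟩ := h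
  exact ⟨y, z, x, rfl, h3, h4, h5, h6, h1, h2⟩

lemma prec2_of_prec3 {p : ℕ} {u v : ℝ × ℝ × ℝ} (h : prec3 p v u) (hz : v.2.2 = u.2.2) :
    prec2 p (v.1, v.2.1) (u.1, u.2.1) := by
  obtain ⟨h1, h2, -⟩ := h
  rw [show v.2.2 - u.2.2 = 0 by rw [hz, sub_self]] at h1 h2
  simp only [mul_zero, add_zero] at h1 h2
  exact ⟨by simpa using h1, by simpa using h2⟩

lemma symm_swap {i : ℕ} {Ji : Set (ℝ × ℝ)} (hs : Symm i Ji) {a : ℝ} :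
    (a, (i : ℝ)) ∈ Ji ↔ ((i : ℝ), a) ∈ Ji := by
  constructor <;> intro h
  · have h' : a ∈ {x : ℝ | (x, (i : ℝ)) ∈ Ji} := h
    rw [hs] at h'; exact h'
  · have h' : a ∈ {y : ℝ | ((i : ℝ), y) ∈ Ji} := h
    rw [← hs] at h'; exact h'

lemma layer_subset_cube {a N : ℤ} {j : ℕ} (ha : a ≤ N) (hj : (j : ℤ) ≤ N) :
    prodLayer (box 0 a 0 a) j ⊆ cube N := by
  rintro w ⟨⟨x, y, hxy, hx0, hx, hy0, hy⟩, hz⟩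
  rw [Prod.ext_iff] at hxy
  refine ⟨x, y, (j : ℤ), ?_, hx0, hx.trans ha, hy0, hy.trans ha, Int.ofNat_nonneg j, hj⟩
  refine Prod.ext hxy.1 (Prod.ext hxy.2 ?_)
  rw [hz]; push_cast; ring

lemma cube_pred_ne {i : ℕ} {w : ℝ × ℝ × ℝ} (h : w ∈ cube ((i : ℤ) - 1)) :
    w.1 ≠ (i : ℝ) ∧ w.2.1 ≠ (i : ℝ) ∧ w.2.2 ≠ (i : ℝ) := by
  obtain ⟨x, y, z, rfl, h1, h2, h3, h4, h5, h6⟩ := h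
  refine ⟨fun he => ?_, fun he => ?_, fun he => ?_⟩
  · have he2 : ((x : ℤ) : ℝ) = ((i : ℕ) : ℝ) := he
    have : x = (i : ℤ) := by exact_mod_cast he2
    omega
  · have he2 : ((y : ℤ) : ℝ) = ((i : ℕ) : ℝ) := he
    have : y = (i : ℤ) := by exact_mod_cast he2
    omega
  · have he2 : ((z : ℤ) : ℝ) = ((i : ℕ) : ℝ) := he
    have : z = (i : ℤ) := by exact_mod_cast he2
    omega

lemma box_coords {a b c d : ℤ} {w : ℝ × ℝ} (h : w ∈ box a b c d) :
    ∃ x y : ℤ, w.1 = x ∧ w.2 = y ∧ a ≤ x ∧ x ≤ b ∧ c ≤ y ∧ y ≤ d := by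
  obtain ⟨x, y, rfl, h⟩ := h
  exact ⟨x, y, rfl, rfl, h⟩

lemma biUnion_update (J : ℕ → Set (ℝ × ℝ)) (Ji : Set (ℝ × ℝ)) (i : ℕ) :
    (⋃ j ∈ {j | j ≤ i}, prodLayer (Function.update J i Ji j) j)
      = (⋃ j ∈ {j | j < i}, prodLayer (J j) j) ∪ prodLayer Ji i := by
  ext w
  simp only [Set.mem_iUnion, Set.mem_setOf_eq, Set.mem_union]
  constructor
  · rintro ⟨j, hj, hw⟩
    rcases lt_or_eq_of_le hj with h | rfl
    · left; exact ⟨j, h, by rwa [Function.update_of_ne h.ne] at hw⟩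
    · right; rwa [Function.update_self] at hw
  · rintro (⟨j, hj, hw⟩ | hw)
    · exact ⟨j, hj.le, by rwa [Function.update_of_ne hj.ne]⟩
    · exact ⟨i, le_refl i, by rwa [Function.update_self]⟩

lemma orbitU_arot (J : ℕ → Set (ℝ × ℝ)) (s : Set ℕ) :
    Arot '' orbitU J s = orbitU J s := by
  unfold orbitU
  rw [Set.image_union, Set.image_union]
  ext w
  simp only [Set.mem_union, mem_arot_image, mem_arot2_image]
  constructor
  · rintro ((h | h) | h) <;> tauto
  · rintro ((h | h) | h) <;> tauto

lemma orbitU_update (J : ℕ → Set (ℝ × ℝ)) (Ji : Set (ℝ × ℝ)) (i : ℕ) :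
    orbitU (Function.update J i Ji) {j | j ≤ i}
      = orbitU J {j | j < i} ∪
        (prodLayer Ji i ∪ Arot '' prodLayer Ji i ∪ Arot '' (Arot '' prodLayer Ji i)) := by
  unfold orbitU
  rw [biUnion_update, Set.image_union, Set.image_union]
  ext w
  simp only [Set.mem_union]
  tauto

end Aux

lemma main_iff (p i : ℕ) (J' : ℕ → Set (ℝ × ℝ)) (W : Set (ℝ × ℝ × ℝ))
    (hWsub : W ⊆ cube ((i : ℤ) - 1))
    (hWId : ∀ u ∈ W, ∀ v ∈ cube ((i : ℤ) - 1), prec3 p v u → v ∈ W)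
    (hWrot : Arot '' W = W)
    (hWeq : W = ⋃ j ∈ {j | j < i}, prodLayer (J' j) j)
    (Ji : Set (ℝ × ℝ)) (hJi : IsIdeal2 p (box 0 (i : ℤ) 0 (i : ℤ)) Ji)
    (hs : Symm i Ji) :
    IsIdeal3 p (cube (i : ℤ))
      (W ∪ (prodLayer Ji i ∪ Arot '' prodLayer Ji i ∪ Arot '' (Arot '' prodLayer Ji i))) ↔
    ((∀ j < i, (prodLayer Ji i + Delta3 p) ∩
        prodLayer (box 0 ((i : ℤ) - 1) 0 ((i : ℤ) - 1)) j ⊆ prodLayer (J' j) j) ∧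
     (∀ j < i, (prodLayer (J' j) j + Delta3 p) ∩ Vset i ⊆ prodLayer Ji i) ∧
     ((prodLayer Ji i + Delta3 p) ∩ (Arot '' Vset i) ⊆ Arot '' prodLayer Ji i) ∧
     ((prodLayer Ji i + Delta3 p) ∩ (Arot '' (Arot '' Vset i)) ⊆
        Arot '' (Arot '' prodLayer Ji i))) := by
  set L := prodLayer Ji i with hLdef
  set U := W ∪ (L ∪ Arot '' L ∪ Arot '' (Arot '' L)) with hUdef
  have hLV : L ⊆ Vset i := fun w hw => ⟨hJi.1 hw.1, hw.2⟩
  have hVC : Vset i ⊆ cube (i : ℤ) := layer_subset_cube le_rfl le_rfl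
  have hLC : L ⊆ cube (i : ℤ) := fun w hw => hVC (hLV hw)
  have hWC : W ⊆ cube (i : ℤ) := fun w hw => cube_mono (by omega) (hWsub hw)
  have hUsub : U ⊆ cube (i : ℤ) := by
    rintro w (hw | ((hw | hw) | hw))
    · exact hWC hw
    · exact hLC hw
    · obtain ⟨t, ht, rfl⟩ := hw
      exact arot_mem_cube (hLC ht)
    · obtain ⟨t, ⟨s, hs', rfl⟩, rfl⟩ := hw
      exact arot_mem_cube (arot_mem_cube (hLC hs'))
  have hUrot : ∀ w ∈ U, Arot w ∈ U := by
    rintro w (hw | ((hw | hw) | hw))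
    · exact Or.inl (hWrot ▸ Set.mem_image_of_mem Arot hw)
    · exact Or.inr (Or.inl (Or.inr (Set.mem_image_of_mem Arot hw)))
    · exact Or.inr (Or.inr (Set.mem_image_of_mem Arot hw))
    · obtain ⟨t, ⟨s, hs', rfl⟩, rfl⟩ := hw
      refine Or.inr (Or.inl (Or.inl ?_))
      rw [arot3]; exact hs'
  constructor
  · rintro ⟨-, hcl⟩
    refine ⟨?_, ?_, ?_, ?_⟩
    · -- condition (2)
      rintro j hj v ⟨hv1, hv2⟩
      obtain ⟨u, hu, hprec⟩ := mem_add_delta.mp hv1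
      have hvC : v ∈ cube (i : ℤ) :=
        layer_subset_cube (by omega) (by exact_mod_cast hj.le) hv2
      have hvU : v ∈ U := hcl u (Or.inr (Or.inl (Or.inl hu))) v hvC hprec
      obtain ⟨hb, hz⟩ := hv2
      obtain ⟨x, y, hx1, hy1, hx0, hx, hy0, hy⟩ := box_coords hb
      have hx1' : v.1 = (x : ℝ) := hx1
      have hy1' : v.2.1 = (y : ℝ) := hy1
      rcases hvU with hw | ((hw | hw) | hw)
      · rw [hWeq] at hw
        simp only [Set.mem_iUnion, Set.mem_setOf_eq] at hw
        obtain ⟨j', hj', hmem⟩ := hw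
        have hjj : (j' : ℝ) = (j : ℝ) := by rw [← hmem.2, hz]
        have hjj2 : j' = j := by exact_mod_cast hjj
        rw [← hjj2]
        exact hmem
      · have : (i : ℝ) = (j : ℝ) := by rw [← hw.2, hz]
        have : i = j := by exact_mod_cast this
        omega
      · rw [mem_arot_image] at hw
        have h21 : v.2.1 = (i : ℝ) := hw.2
        rw [hy1'] at h21
        have : y = (i : ℤ) := by exact_mod_cast h21
        omega
      · rw [mem_arot2_image] at hw
        have h1 : v.1 = (i : ℝ) := hw.2
        rw [hx1'] at h1
        have : x = (i : ℤ) := by exact_mod_cast h1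
        omega
    · -- condition (3)
      rintro j hj v ⟨hv1, hv2⟩
      obtain ⟨u, hu, hprec⟩ := mem_add_delta.mp hv1
      have huW : u ∈ W := by rw [hWeq]; exact Set.mem_biUnion hj hu
      have hvU : v ∈ U := hcl u (Or.inl huW) v (hVC hv2) hprec
      obtain ⟨hb, hz⟩ := hv2
      rcases hvU with hw | ((hw | hw) | hw)
      · exact absurd hz (cube_pred_ne (hWsub hw)).2.2
      · exact hw
      · rw [mem_arot_image] at hw
        obtain ⟨hJ, h21⟩ := hw
        have hJ' : (v.2.2, v.1) ∈ Ji := hJ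
        have h21' : v.2.1 = (i : ℝ) := h21
        rw [hz] at hJ'
        refine ⟨?_, hz⟩
        show (v.1, v.2.1) ∈ Ji
        rw [h21']
        exact (symm_swap hs).mpr hJ'
      · rw [mem_arot2_image] at hw
        obtain ⟨hJ, h1⟩ := hw
        have hJ' : (v.2.1, v.2.2) ∈ Ji := hJ
        have h1' : v.1 = (i : ℝ) := h1
        rw [hz] at hJ'
        refine ⟨?_, hz⟩
        show (v.1, v.2.1) ∈ Ji
        rw [h1']
        exact (symm_swap hs).mp hJ'
    · -- condition (4)
      rintro v ⟨hv1, hv2⟩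
      obtain ⟨u, hu, hprec⟩ := mem_add_delta.mp hv1
      rw [mem_arot_image] at hv2
      have hvC : v ∈ cube (i : ℤ) := arot_mem_cube (hVC hv2)
      have hvU : v ∈ U := hcl u (Or.inr (Or.inl (Or.inl hu))) v hvC hprec
      obtain ⟨hbb, h21⟩ := hv2
      have h21' : v.2.1 = (i : ℝ) := h21
      rw [mem_arot_image]
      refine ⟨?_, h21'⟩
      show (v.2.2, v.1) ∈ Ji
      rcases hvU with hw | ((hw | hw) | hw)
      · exact absurd h21' (cube_pred_ne (hWsub hw)).2.1
      · obtain ⟨hJ, h22⟩ := hw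
        rw [h21'] at hJ
        rw [h22]
        exact (symm_swap hs).mp hJ
      · exact (mem_arot_image.mp hw).1
      · rw [mem_arot2_image] at hw
        obtain ⟨hJ, h1⟩ := hw
        have hJ' : (v.2.1, v.2.2) ∈ Ji := hJ
        have h1' : v.1 = (i : ℝ) := h1
        rw [h21'] at hJ'
        rw [h1']
        exact (symm_swap hs).mpr hJ'
    · -- condition (5)
      rintro v ⟨hv1, hv2⟩
      obtain ⟨u, hu, hprec⟩ := mem_add_delta.mp hv1
      rw [mem_arot2_image] at hv2
      have hvC : v ∈ cube (i : ℤ) := arot_mem_cube (arot_mem_cube (hVC hv2))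
      have hvU : v ∈ U := hcl u (Or.inr (Or.inl (Or.inl hu))) v hvC hprec
      obtain ⟨hbb, h1⟩ := hv2
      have h1' : v.1 = (i : ℝ) := h1
      rw [mem_arot2_image]
      refine ⟨?_, h1'⟩
      show (v.2.1, v.2.2) ∈ Ji
      rcases hvU with hw | ((hw | hw) | hw)
      · exact absurd h1' (cube_pred_ne (hWsub hw)).1
      · obtain ⟨hJ, h22⟩ := hw
        rw [h1'] at hJ
        rw [h22]
        exact (symm_swap hs).mpr hJ
      · rw [mem_arot_image] at hw
        obtain ⟨hJ, h21⟩ := hw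
        have hJ' : (v.2.2, v.1) ∈ Ji := hJ
        have h21' : v.2.1 = (i : ℝ) := h21
        rw [h1'] at hJ'
        rw [h21']
        exact (symm_swap hs).mp hJ'
      · exact (mem_arot2_image.mp hw).1
  · rintro ⟨c2, c3, c4, c5⟩
    refine ⟨hUsub, ?_⟩
    have hVL : ∀ u ∈ U, ∀ v ∈ Vset i, prec3 p v u → v ∈ L := by
      rintro u (hu | ((hu | hu) | hu)) v hv hprec
      · rw [hWeq] at hu
        simp only [Set.mem_iUnion, Set.mem_setOf_eq] at hu
        obtain ⟨j, hj, hu'⟩ := hu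
        exact c3 j hj ⟨mem_add_delta.mpr ⟨_, hu', hprec⟩, hv⟩
      · obtain ⟨hbV, hzv⟩ := hv
        have hz : v.2.2 = u.2.2 := by rw [hzv, hu.2]
        exact ⟨hJi.2 _ hu.1 _ hbV (prec2_of_prec3 hprec hz), hzv⟩
      · rw [mem_arot_image] at hu
        have hprec' : prec3 p (Arot (Arot v)) (Arot (Arot u)) :=
          prec3_arot.mpr (prec3_arot.mpr hprec)
        have hmem : Arot (Arot v) ∈ Arot '' (Arot '' Vset i) :=
          Set.mem_image_of_mem _ (Set.mem_image_of_mem _ hv)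
        have h5 := c5 ⟨mem_add_delta.mpr ⟨(u.2.2, u.1, u.2.1), hu, hprec'⟩, hmem⟩
        rw [mem_arot2_image] at h5
        exact h5
      · rw [mem_arot2_image] at hu
        have hprec' : prec3 p (Arot v) (Arot u) := prec3_arot.mpr hprec
        have hmem : Arot v ∈ Arot '' Vset i := Set.mem_image_of_mem _ hv
        have h4 := c4 ⟨mem_add_delta.mpr ⟨(u.2.1, u.2.2, u.1), hu, hprec'⟩, hmem⟩
        rw [mem_arot_image] at h4
        exact h4
    have hC0 : ∀ u, u ∈ W ∨ u ∈ L → ∀ v ∈ cube ((i : ℤ) - 1), prec3 p v u → v ∈ W := by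
      rintro u (hu | hu) v hv hprec
      · exact hWId u hu v hv hprec
      · obtain ⟨x, y, z, rfl, hx0, hx, hy0, hy, hz0, hz⟩ := hv
        have hji : z.toNat < i := by omega
        have hmem : ((x : ℝ), (y : ℝ), (z : ℝ)) ∈
            prodLayer (box 0 ((i : ℤ) - 1) 0 ((i : ℤ) - 1)) z.toNat := by
          refine ⟨⟨x, y, rfl, hx0, hx, hy0, hy⟩, ?_⟩
          show (z : ℝ) = ((z.toNat : ℕ) : ℝ)
          have hc := congrArg (Int.cast : ℤ → ℝ) (Int.toNat_of_nonneg hz0).symm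
          exact_mod_cast hc
        have h2 := c2 z.toNat hji ⟨mem_add_delta.mpr ⟨u, hu, hprec⟩, hmem⟩
        rw [hWeq]
        exact Set.mem_biUnion hji h2
    have hCW : ∀ u ∈ U, ∀ v ∈ cube ((i : ℤ) - 1), prec3 p v u → v ∈ W := by
      rintro u (hu | ((hu | hu) | hu)) v hv hprec
      · exact hC0 u (Or.inl hu) v hv hprec
      · exact hC0 u (Or.inr hu) v hv hprec
      · rw [mem_arot_image] at hu
        have h := hC0 _ (Or.inr hu) (Arot (Arot v)) (arot_mem_cube (arot_mem_cube hv))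
          (prec3_arot.mpr (prec3_arot.mpr hprec))
        have h2 : Arot (Arot (Arot v)) ∈ W := by
          rw [← hWrot]; exact Set.mem_image_of_mem _ h
        rwa [arot3] at h2
      · rw [mem_arot2_image] at hu
        have h := hC0 _ (Or.inr hu) (Arot v) (arot_mem_cube hv) (prec3_arot.mpr hprec)
        have h2 : Arot (Arot (Arot v)) ∈ W := by
          rw [← hWrot]
          refine Set.mem_image_of_mem _ ?_
          rw [← hWrot]
          exact Set.mem_image_of_mem _ h
        rwa [arot3] at h2
    rintro u hu v hv hprec
    obtain ⟨x, y, z, rfl, hx0, hx, hy0, hy, hz0, hz⟩ := hv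
    by_cases hzz : z = (i : ℤ)
    · subst hzz
      have hvV : ((x : ℝ), (y : ℝ), ((i : ℤ) : ℝ)) ∈ Vset i :=
        ⟨⟨x, y, rfl, hx0, hx, hy0, hy⟩, by push_cast; ring⟩
      exact Or.inr (Or.inl (Or.inl (hVL u hu _ hvV hprec)))
    · by_cases hyy : y = (i : ℤ)
      · subst hyy
        have hvV : ((z : ℝ), (x : ℝ), ((i : ℤ) : ℝ)) ∈ Vset i :=
          ⟨⟨z, x, rfl, hz0, hz, hx0, hx⟩, by push_cast; ring⟩
        have h := hVL (Arot (Arot u)) (hUrot _ (hUrot _ hu)) _ hvV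
          (prec3_arot.mpr (prec3_arot.mpr hprec))
        refine Or.inr (Or.inl (Or.inr ?_))
        exact ⟨_, h, rfl⟩
      · by_cases hxx : x = (i : ℤ)
        · subst hxx
          have hvV : ((y : ℝ), (z : ℝ), ((i : ℤ) : ℝ)) ∈ Vset i :=
            ⟨⟨y, z, rfl, hy0, hy, hz0, hz⟩, by push_cast; ring⟩
          have h := hVL (Arot u) (hUrot _ hu) _ hvV (prec3_arot.mpr hprec)
          refine Or.inr (Or.inr ?_)
          exact ⟨_, Set.mem_image_of_mem _ h, rfl⟩
        · have hvc : ((x : ℝ), (y : ℝ), (z : ℝ)) ∈ cube ((i : ℤ) - 1) :=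
            ⟨x, y, z, rfl, hx0, by omega, hy0, by omega, hz0, by omega⟩
          exact Or.inl (hCW u hu _ hvc hprec)

/-- Lemma 5.1: criterion for `J_i` to be consistent with `J₀,…,J_{i-1}`. -/
theorem stmt15 (p m n i : ℕ) (hp : p.Prime) (hm : 0 < m) (h3 : 3 ∣ m)
    (hn : n = m / 3 * (p - 1)) (hi1 : 1 ≤ i) (hi2 : i ≤ n)
    (J : ℕ → Set (ℝ × ℝ))
    (hJideal : ∀ j < i, IsIdeal2 p (box 0 (j : ℤ) 0 (j : ℤ)) (J j))
    (hJsym : ∀ j < i, Symm j (J j))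
    (hconsIdeal : IsIdeal3 p (cube ((i : ℤ) - 1)) (orbitU J {j | j < i}))
    (hconsInv : Arot '' orbitU J {j | j < i} = orbitU J {j | j < i})
    (J' : ℕ → Set (ℝ × ℝ))
    (hJ'ideal : ∀ j < i, IsIdeal2 p (box 0 ((i : ℤ) - 1) 0 ((i : ℤ) - 1)) (J' j))
    (hJ'eq : orbitU J {j | j < i} = ⋃ j ∈ {j | j < i}, prodLayer (J' j) j)
    (Ji : Set (ℝ × ℝ)) (hJi : IsIdeal2 p (box 0 (i : ℤ) 0 (i : ℤ)) Ji) :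
    (Symm i Ji ∧
      IsIdeal3 p (cube (i : ℤ)) (orbitU (Function.update J i Ji) {j | j ≤ i}) ∧
      Arot '' orbitU (Function.update J i Ji) {j | j ≤ i} =
        orbitU (Function.update J i Ji) {j | j ≤ i}) ↔
    (Symm i Ji ∧
      (∀ j < i, (prodLayer Ji i + Delta3 p) ∩
          prodLayer (box 0 ((i : ℤ) - 1) 0 ((i : ℤ) - 1)) j ⊆ prodLayer (J' j) j) ∧
      (∀ j < i, (prodLayer (J' j) j + Delta3 p) ∩ Vset i ⊆ prodLayer Ji i) ∧
      ((prodLayer Ji i + Delta3 p) ∩ (Arot '' Vset i) ⊆ Arot '' prodLayer Ji i) ∧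
      ((prodLayer Ji i + Delta3 p) ∩ (Arot '' (Arot '' Vset i)) ⊆
        Arot '' (Arot '' prodLayer Ji i))) := by
  have hdec := orbitU_update J Ji i
  constructor
  · rintro ⟨hsym, hId, -⟩
    rw [hdec] at hId
    obtain ⟨c2, c3, c4, c5⟩ :=
      (main_iff p i J' _ hconsIdeal.1 hconsIdeal.2 hconsInv hJ'eq Ji hJi hsym).mp hId
    exact ⟨hsym, c2, c3, c4, c5⟩
  · rintro ⟨hsym, c2, c3, c4, c5⟩
    refine ⟨hsym, ?_, orbitU_arot _ _⟩
    rw [hdec]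
    exact (main_iff p i J' _ hconsIdeal.1 hconsIdeal.2 hconsInv hJ'eq Ji hJi hsym).mpr
      ⟨c2, c3, c4, c5⟩
end
end

section
/- Let 1 ≤ i ≤ n, let J₀,…,J_{i−1} be a consistent sequence (J_j a symmetric ideal of [0,j]²), with associated ideals J_{i,j} of [0,i−1]² (0 ≤ j < i), and let J_i be an ideal of [0,i]². If (1) {x : (x,i) ∈ J_i} = {y : (i,y) ∈ J_i}, (2) (J_i×{i} + Δ) ∩ ([0,i−1]² × {j}) ⊆ J_{i,j} × {j} for all 0 ≤ j < i, and (3) (J_{i,j}×{j} + Δ) ∩ V_i ⊆ J_i × {i} for all 0 ≤ j < i, then also (4) (J_i×{i} + Δ) ∩ V_i^A ⊆ (J_i×{i})^A. -/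
open Pointwise

noncomputable section

set_option maxHeartbeats 1000000 in
private lemma auxQ (p i a b x y : ℤ) (hp2 : 2 ≤ p) (hiz : 1 ≤ i)
    (ha0 : 0 ≤ a) (hai : a ≤ i) (hb0 : 0 ≤ b) (hbs : b ≤ i - 1)
    (hx0 : 0 ≤ x) (hxi : x ≤ i) (hy0 : 0 ≤ y) (hyt : y ≤ i - 1)
    (H1 : (a - x) + p * (i - y) + p ^ 2 * (b - i) ≤ 0)
    (H2 : p ^ 2 * (a - x) + (i - y) + p * (b - i) ≤ 0)
    (H3 : p * (a - x) + p ^ 2 * (i - y) + (b - i) ≤ 0)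
    (hN : 1 ≤ (b - x) + p * (a - y) ∨ 1 ≤ p ^ 2 * (b - x) + (a - y)) :
    ∃ q1 q2 q3 : ℤ,
      0 ≤ q1 ∧ q1 ≤ i - 1 ∧ 0 ≤ q2 ∧ q2 ≤ i - 1 ∧ 0 ≤ q3 ∧ q3 ≤ i - 1 ∧
      ((q1 - x) + p * (q2 - y) + p ^ 2 * (q3 - i) ≤ 0 ∧
       p ^ 2 * (q1 - x) + (q2 - y) + p * (q3 - i) ≤ 0 ∧
       p * (q1 - x) + p ^ 2 * (q2 - y) + (q3 - i) ≤ 0) ∧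
      ((a - q1) + p * (i - q2) + p ^ 2 * (b - q3) ≤ 0 ∧
       p ^ 2 * (a - q1) + (i - q2) + p * (b - q3) ≤ 0 ∧
       p * (a - q1) + p ^ 2 * (i - q2) + (b - q3) ≤ 0) ∧
      ((b - q3) + p * (a - q1) + p ^ 2 * (i - q2) ≤ 0 ∧
       p ^ 2 * (b - q3) + (a - q1) + p * (i - q2) ≤ 0 ∧
       p * (b - q3) + p ^ 2 * (a - q1) + (i - q2) ≤ 0) := by
  have hppos : (0:ℤ) ≤ p := by omega
  have hsq : p + 1 ≤ p ^ 2 := by nlinarith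
  have hp2pos : (0:ℤ) ≤ p ^ 2 := by positivity
  have hp3 : (0:ℤ) ≤ p ^ 3 - 1 := by nlinarith
  have hG : (2:ℤ) ≤ p * (i - 1 - y) + (i - x) := by
    rcases lt_or_ge 1 (i - y) with hty | hty
    · have k := mul_le_mul_of_nonneg_left (show (1:ℤ) ≤ i - 1 - y by omega) hppos
      linarith [k]
    · have hy' : y = i - 1 := by omega
      by_contra hcon
      push_neg at hcon
      rw [hy'] at hcon H3 hN
      have hxlb : i - 1 ≤ x := by linarith [hcon]
      have hx' : x = i - 1 ∨ x = i := by omega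
      rcases hN with hN | hN
      · rcases hx' with hx' | hx' <;> rw [hx'] at H3 hN <;> linarith [H3, hN, hsq]
      · rcases hx' with hx' | hx'
        · rw [hx'] at H3 hN
          rcases eq_or_lt_of_le hbs with hb' | hb'
          · rw [hb'] at H3 hN
            have ha' : a = i := le_antisymm hai (by linarith [hN])
            rw [ha'] at H3
            linarith [H3, hp2, hsq]
          · have k1 : p ^ 2 ≤ p ^ 2 * (i - 1 - b) := le_mul_of_one_le_right hp2pos (by omega)
            linarith [hN, k1, hai, hsq]
        · rw [hx'] at H3 hN
          have k1 : p ^ 2 ≤ p ^ 2 * (i - b) := le_mul_of_one_le_right hp2pos (by omega)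
          linarith [hN, k1, hai]
  set f : ℤ := max 0 (a + p - i + 1) with hfdef
  have hf0 : (0:ℤ) ≤ f := le_max_left _ _
  have hfle : f ≤ a + p := max_le (by omega) (by omega)
  have hfge : a + p - i + 1 ≤ f := le_max_right _ _
  have hfp3 : (0:ℤ) ≤ f * (p ^ 3 - 1) := mul_nonneg hf0 hp3
  have hpf0 : (0:ℤ) ≤ p * f := mul_nonneg hppos hf0
  have hfcase : (f = 0 ∧ a + p - i + 1 ≤ 0) ∨ f = a + p - i + 1 := by
    rcases max_choice 0 (a + p - i + 1) with he | he
    · exact Or.inl ⟨he, by omega⟩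
    · exact Or.inr he
  have hq3b : b + p * f ≤ i - 1 := by
    rcases hfcase with ⟨he, hc⟩ | he
    · rw [he]; linarith
    · have hpG := mul_le_mul_of_nonneg_left hG hppos
      rw [he]; nlinarith [H3, hpG]
  have E1 : ((a + p - f) - x) + p * ((i - 1) - y) + p ^ 2 * ((b + p * f) - i) ≤ 0 := by
    rcases hfcase with ⟨he, hc⟩ | he
    · rw [he]; linarith [H1]
    · have hGf : f ≤ (a - x) + p * (i - y) := by rw [he]; linarith [hG]
      have k1 := mul_le_mul_of_nonneg_left hGf hp3
      have k2 : p ^ 2 * (p * (a - x) + p ^ 2 * (i - y) + (b - i)) ≤ 0 :=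
        mul_nonpos_iff.mpr (Or.inl ⟨hp2pos, H3⟩)
      nlinarith [k1, k2]
  have E2 : p ^ 2 * ((a + p - f) - x) + ((i - 1) - y) + p * ((b + p * f) - i) ≤ 0 := by
    have k3 : p * (p * (a - x) + p ^ 2 * (i - y) + (b - i)) ≤ 0 :=
      mul_nonpos_iff.mpr (Or.inl ⟨hppos, H3⟩)
    have k4 : (0:ℤ) ≤ (p ^ 3 - 1) * (i - y - 1) := mul_nonneg hp3 (by omega)
    nlinarith [k3, k4]
  have E3 : p * ((a + p - f) - x) + p ^ 2 * ((i - 1) - y) + ((b + p * f) - i) ≤ 0 := by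
    nlinarith [H3]
  refine ⟨a + p - f, i - 1, b + p * f, by omega, by omega, by omega, by omega,
    by omega, hq3b, ⟨E1, E2, E3⟩, ⟨?_, ?_, ?_⟩, ⟨?_, ?_, ?_⟩⟩
  · nlinarith [hfp3]
  · nlinarith [hp3]
  · nlinarith []
  · nlinarith []
  · nlinarith [hfp3]
  · nlinarith [hp3]


set_option maxHeartbeats 1000000 in
/-- Lemma 5.2: conditions (1)–(3) of Lemma 5.1 imply condition (4). -/
theorem stmt16 (p m n i : ℕ) (hp : p.Prime) (hm : 0 < m) (h3 : 3 ∣ m)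
    (hn : n = m / 3 * (p - 1)) (hi1 : 1 ≤ i) (hi2 : i ≤ n)
    (J : ℕ → Set (ℝ × ℝ))
    (hJideal : ∀ j < i, IsIdeal2 p (box 0 (j : ℤ) 0 (j : ℤ)) (J j))
    (hJsym : ∀ j < i, Symm j (J j))
    (hconsIdeal : IsIdeal3 p (cube ((i : ℤ) - 1)) (orbitU J {j | j < i}))
    (hconsInv : Arot '' orbitU J {j | j < i} = orbitU J {j | j < i})
    (J' : ℕ → Set (ℝ × ℝ))
    (hJ'ideal : ∀ j < i, IsIdeal2 p (box 0 ((i : ℤ) - 1) 0 ((i : ℤ) - 1)) (J' j))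
    (hJ'eq : orbitU J {j | j < i} = ⋃ j ∈ {j | j < i}, prodLayer (J' j) j)
    (Ji : Set (ℝ × ℝ)) (hJi : IsIdeal2 p (box 0 (i : ℤ) 0 (i : ℤ)) Ji)
    (h1 : Symm i Ji)
    (h2 : ∀ j < i, (prodLayer Ji i + Delta3 p) ∩
        prodLayer (box 0 ((i : ℤ) - 1) 0 ((i : ℤ) - 1)) j ⊆ prodLayer (J' j) j)
    (h3' : ∀ j < i, (prodLayer (J' j) j + Delta3 p) ∩ Vset i ⊆ prodLayer Ji i) :
    (prodLayer Ji i + Delta3 p) ∩ (Arot '' Vset i) ⊆ Arot '' prodLayer Ji i := by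
  intro w hw
  obtain ⟨hw1, v, hv, hvw⟩ := hw
  obtain ⟨⟨b, a, hv12, hb0, hbi, ha0, hai⟩, hv3⟩ := hv
  have hveq : v = ((b : ℝ), (a : ℝ), (i : ℝ)) := by
    have e1 := congrArg Prod.fst hv12
    have e2 := congrArg Prod.snd hv12
    simp only [] at e1 e2
    exact Prod.ext_iff.mpr ⟨e1, Prod.ext_iff.mpr ⟨e2, hv3⟩⟩
  have hweq : w = ((a : ℝ), (i : ℝ), (b : ℝ)) := by
    rw [← hvw, hveq]; rfl
  obtain ⟨u, hu, δ, hδ, huδ⟩ := Set.mem_add.1 hw1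
  obtain ⟨huJ, hu3⟩ := hu
  obtain ⟨x, y, hu12, hx0, hxi, hy0, hyi⟩ := hJi.1 huJ
  have hueq : u = ((x : ℝ), (y : ℝ), (i : ℝ)) := by
    have e1 := congrArg Prod.fst hu12
    have e2 := congrArg Prod.snd hu12
    simp only [] at e1 e2
    exact Prod.ext_iff.mpr ⟨e1, Prod.ext_iff.mpr ⟨e2, hu3⟩⟩
  have huJ' : ((x : ℝ), (y : ℝ)) ∈ Ji := hu12 ▸ huJ
  have hδeq : δ = w - u := by rw [← huδ]; abel
  rw [hδeq, hweq, hueq] at hδ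
  obtain ⟨R1, R2, R3⟩ := hδ
  simp only [Prod.fst_sub, Prod.snd_sub, Prod.fst_zero, Prod.snd_zero, sub_zero] at R1 R2 R3
  have H1 : (a - x) + (p : ℤ) * ((i : ℤ) - y) + (p : ℤ) ^ 2 * (b - (i : ℤ)) ≤ 0 := by
    exact_mod_cast R1
  have H2 : (p : ℤ) ^ 2 * (a - x) + ((i : ℤ) - y) + (p : ℤ) * (b - (i : ℤ)) ≤ 0 := by
    exact_mod_cast R2
  have H3z : (p : ℤ) * (a - x) + (p : ℤ) ^ 2 * ((i : ℤ) - y) + (b - (i : ℤ)) ≤ 0 := by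
    exact_mod_cast R3
  have hp2 : (2:ℤ) ≤ (p:ℤ) := by exact_mod_cast hp.two_le
  have hiz : (1:ℤ) ≤ (i:ℤ) := by exact_mod_cast hi1
  have hbox : ∀ c d : ℤ, 0 ≤ c → c ≤ (i:ℤ) → 0 ≤ d → d ≤ (i:ℤ) →
      ((c:ℝ), (d:ℝ)) ∈ box 0 (i:ℤ) 0 (i:ℤ) := by
    intro c d h1' h2' h3'' h4'
    exact ⟨c, d, rfl, h1', h2', h3'', h4'⟩
  have hD2 : ∀ c d e g : ℤ, (c - e) + (p:ℤ)*(d - g) ≤ 0 → (p:ℤ)^2*(c - e) + (d - g) ≤ 0 →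
      prec2 p ((c:ℝ), (d:ℝ)) ((e:ℝ), (g:ℝ)) := by
    intro c d e g hA hB
    constructor
    · simp only [Prod.fst_sub, Prod.snd_sub]
      exact_mod_cast hA
    · simp only [Prod.fst_sub, Prod.snd_sub]
      exact_mod_cast hB
  have key : ((b : ℝ), (a : ℝ)) ∈ Ji := by
    by_cases hbI : b = (i:ℤ)
    · -- case b = i : use ideal to get (a,i) ∈ Ji, then symmetry
      subst hbI
      have hA : (a - x) + (p:ℤ) * ((i:ℤ) - y) ≤ 0 := by nlinarith [H1]
      have hB : (p:ℤ)^2 * (a - x) + ((i:ℤ) - y) ≤ 0 := by nlinarith [H2]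
      have haJ : ((a:ℝ), ((i:ℤ):ℝ)) ∈ Ji :=
        hJi.2 _ huJ' _ (hbox a (i:ℤ) ha0 hai (by omega) (le_refl _)) (hD2 a (i:ℤ) x y hA hB)
      have hmem : (a:ℝ) ∈ {t : ℝ | (t, (i:ℝ)) ∈ Ji} := by
        show ((a:ℝ), (i:ℝ)) ∈ Ji
        have hcast : (((i:ℤ)):ℝ) = (i:ℝ) := by push_cast; rfl
        rw [← hcast]; exact haJ
      rw [h1] at hmem
      have hfin : ((i:ℝ), (a:ℝ)) ∈ Ji := hmem
      have hcast : (((i:ℤ)):ℝ) = (i:ℝ) := by push_cast; rfl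
      rw [hcast]; exact hfin
    · by_cases hyI : y = (i:ℤ)
      · -- case y = i : symmetry then ideal
        subst hyI
        have hA : (b - (i:ℤ)) + (p:ℤ) * (a - x) ≤ 0 := by nlinarith [H3z]
        have hB : (p:ℤ)^2 * (b - (i:ℤ)) + (a - x) ≤ 0 := by nlinarith [H1]
        have hxJ : (x:ℝ) ∈ {t : ℝ | (t, (i:ℝ)) ∈ Ji} := by
          show ((x:ℝ), (i:ℝ)) ∈ Ji
          have hcast : (((i:ℤ)):ℝ) = (i:ℝ) := by push_cast; rfl
          rw [← hcast]; exact huJ'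
        rw [h1] at hxJ
        have hfin : (((i:ℝ)), (x:ℝ)) ∈ Ji := hxJ
        have hcast : (((i:ℤ)):ℝ) = (i:ℝ) := by push_cast; rfl
        have hfin' : ((((i:ℤ)):ℝ), (x:ℝ)) ∈ Ji := by rw [hcast]; exact hfin
        exact hJi.2 _ hfin' _ (hbox b a hb0 hbi ha0 hai) (hD2 b a (i:ℤ) x hA hB)
      · by_cases h2d : (b - x) + (p:ℤ)*(a - y) ≤ 0 ∧ (p:ℤ)^2*(b - x) + (a - y) ≤ 0
        · exact hJi.2 _ huJ' _ (hbox b a hb0 hbi ha0 hai) (hD2 b a x y h2d.1 h2d.2)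
        · -- main case : use the intermediate point from auxQ
          have hs1 : b ≤ (i:ℤ) - 1 := by omega
          have ht1 : y ≤ (i:ℤ) - 1 := by omega
          have hN : 1 ≤ (b - x) + (p:ℤ)*(a - y) ∨ 1 ≤ (p:ℤ)^2*(b - x) + (a - y) := by
            rcases not_and_or.mp h2d with h | h
            · left; omega
            · right; omega
          obtain ⟨q1, q2, q3, hq10, hq1b, hq20, hq2b, hq30, hq3b,
            ⟨E1z, E2z, E3z⟩, ⟨W1z, W2z, W3z⟩, ⟨V1z, V2z, V3z⟩⟩ :=
            auxQ (p:ℤ) (i:ℤ) a b x y hp2 hiz ha0 hai hb0 hs1 hx0 hxi hy0 ht1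
              (by linarith [H1]) (by linarith [H2]) (by linarith [H3z]) hN
          set j : ℕ := q3.toNat with hjdef
          have hjcast : (j:ℤ) = q3 := Int.toNat_of_nonneg hq30
          have hji : j < i := by omega
          have hqdelta : ((q1:ℝ), (q2:ℝ), (q3:ℝ)) - u ∈ Delta3 p := by
            rw [hueq]
            refine ⟨?_, ?_, ?_⟩ <;>
              simp only [Prod.fst_sub, Prod.snd_sub, Prod.fst_zero, Prod.snd_zero, sub_zero]
            · exact_mod_cast E1z
            · exact_mod_cast E2z
            · exact_mod_cast E3z
          have hqsum : ((q1:ℝ), (q2:ℝ), (q3:ℝ)) ∈ prodLayer Ji i + Delta3 p :=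
            Set.mem_add.mpr ⟨u, ⟨huJ, hu3⟩, ((q1:ℝ), (q2:ℝ), (q3:ℝ)) - u, hqdelta, by abel⟩
          have hq2box : ((q1:ℝ), (q2:ℝ), (q3:ℝ)) ∈
              prodLayer (box 0 ((i:ℤ) - 1) 0 ((i:ℤ) - 1)) j := by
            refine ⟨⟨q1, q2, rfl, hq10, hq1b, hq20, hq2b⟩, ?_⟩
            show ((q3:ℤ):ℝ) = (j:ℝ)
            exact_mod_cast congrArg (fun t : ℤ => (t:ℝ)) hjcast.symm
          have hq' : ((q1:ℝ), (q2:ℝ), (q3:ℝ)) ∈ prodLayer (J' j) j := h2 j hji ⟨hqsum, hq2box⟩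
          have hqorb : ((q1:ℝ), (q2:ℝ), (q3:ℝ)) ∈ orbitU J {j | j < i} := by
            rw [hJ'eq]; exact Set.mem_biUnion hji hq'
          have hA1 : Arot ((q1:ℝ), (q2:ℝ), (q3:ℝ)) ∈ orbitU J {j | j < i} := by
            rw [← hconsInv]; exact ⟨_, hqorb, rfl⟩
          have hA2 : Arot (Arot ((q1:ℝ), (q2:ℝ), (q3:ℝ))) ∈ orbitU J {j | j < i} := by
            rw [← hconsInv]; exact ⟨_, hA1, rfl⟩
          rw [hJ'eq] at hA2
          simp only [Set.mem_iUnion, Set.mem_setOf_eq, exists_prop] at hA2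
          obtain ⟨j0, hj0, hA2m⟩ := hA2
          have hwdelta : ((b:ℝ), (a:ℝ), (i:ℝ)) - Arot (Arot ((q1:ℝ), (q2:ℝ), (q3:ℝ)))
              ∈ Delta3 p := by
            show ((b:ℝ), (a:ℝ), (i:ℝ)) - ((q3:ℝ), (q1:ℝ), (q2:ℝ)) ∈ Delta3 p
            refine ⟨?_, ?_, ?_⟩ <;>
              simp only [Prod.fst_sub, Prod.snd_sub, Prod.fst_zero, Prod.snd_zero, sub_zero]
            · exact_mod_cast V1z
            · exact_mod_cast V2z
            · exact_mod_cast V3z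
          have hwp : ((b:ℝ), (a:ℝ), (i:ℝ)) ∈ prodLayer Ji i := by
            apply h3' j0 hj0
            exact ⟨Set.mem_add.mpr ⟨Arot (Arot ((q1:ℝ), (q2:ℝ), (q3:ℝ))), hA2m,
              ((b:ℝ), (a:ℝ), (i:ℝ)) - Arot (Arot ((q1:ℝ), (q2:ℝ), (q3:ℝ))), hwdelta, by abel⟩,
              ⟨hbox b a hb0 hbi ha0 hai, rfl⟩⟩
          exact hwp.1
  exact ⟨((b : ℝ), (a : ℝ), (i : ℝ)), ⟨key, rfl⟩, by rw [hweq]; rfl⟩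
end
end

section
/- Let 1 ≤ i ≤ n, let J₀,…,J_{i−1} be a consistent sequence (J_j a symmetric ideal of [0,j]²), with associated ideals J_{i,j} of [0,i−1]² (0 ≤ j < i), and let J_i be an ideal of [0,i]². Assume: (1) {x : (x,i) ∈ J_i} = {y : (i,y) ∈ J_i}; (2) (J_i×{i} + Δ) ∩ ([0,i−1]² × {j}) ⊆ J_{i,j} × {j} for all 0 ≤ j < i; (3) (J_{i,j}×{j} + Δ) ∩ V_i ⊆ J_i × {i} for all 0 ≤ j < i; (4) (J_i×{i} + Δ) ∩ V_i^A ⊆ (J_i×{i})^A. Then condition (5) (J_i×{i} + Δ) ∩ V_i^{A²} ⊆ (J_i×{i})^{A²} holds if and only if: whenever i ≥ p and (i−1, y) ∈ J_i, one has (y, i−p) ∈ J_i (equivalently, if i ≥ p then max{y : (i−1,y) ∈ J_i} ≤ max{x : (x,i−p) ∈ J_i} whenever the first set is nonempty). In particular, if i < p then (5) holds automatically. -/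
open Pointwise

noncomputable section

private lemma mem_Delta3' {p : ℕ} {d1 d2 d3 : ℝ}
    (hh1 : d1 + (p:ℝ) * d2 + (p:ℝ)^2 * d3 ≤ 0)
    (hh2 : (p:ℝ)^2 * d1 + d2 + (p:ℝ) * d3 ≤ 0)
    (hh3 : (p:ℝ) * d1 + (p:ℝ)^2 * d2 + d3 ≤ 0) : (d1, d2, d3) ∈ Delta3 p := by
  simp only [Delta3, Set.mem_setOf_eq, prec3, Prod.fst_zero, Prod.snd_zero, sub_zero]
  exact ⟨hh1, hh2, hh3⟩

/-- Lemma 5.3: under conditions (1)–(4) of Lemma 5.1, condition (5) holds iff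
whenever `i ≥ p` and `(i-1, y) ∈ J_i` one has `(y, i-p) ∈ J_i`. -/
theorem stmt17 (p m n i : ℕ) (hp : p.Prime) (hm : 0 < m) (h3 : 3 ∣ m)
    (hn : n = m / 3 * (p - 1)) (hi1 : 1 ≤ i) (hi2 : i ≤ n)
    (J : ℕ → Set (ℝ × ℝ))
    (hJideal : ∀ j < i, IsIdeal2 p (box 0 (j : ℤ) 0 (j : ℤ)) (J j))
    (hJsym : ∀ j < i, Symm j (J j))
    (hconsIdeal : IsIdeal3 p (cube ((i : ℤ) - 1)) (orbitU J {j | j < i}))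
    (hconsInv : Arot '' orbitU J {j | j < i} = orbitU J {j | j < i})
    (J' : ℕ → Set (ℝ × ℝ))
    (hJ'ideal : ∀ j < i, IsIdeal2 p (box 0 ((i : ℤ) - 1) 0 ((i : ℤ) - 1)) (J' j))
    (hJ'eq : orbitU J {j | j < i} = ⋃ j ∈ {j | j < i}, prodLayer (J' j) j)
    (Ji : Set (ℝ × ℝ)) (hJi : IsIdeal2 p (box 0 (i : ℤ) 0 (i : ℤ)) Ji)
    (h1 : Symm i Ji)
    (h2 : ∀ j < i, (prodLayer Ji i + Delta3 p) ∩
        prodLayer (box 0 ((i : ℤ) - 1) 0 ((i : ℤ) - 1)) j ⊆ prodLayer (J' j) j)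
    (h3' : ∀ j < i, (prodLayer (J' j) j + Delta3 p) ∩ Vset i ⊆ prodLayer Ji i)
    (h4 : (prodLayer Ji i + Delta3 p) ∩ (Arot '' Vset i) ⊆ Arot '' prodLayer Ji i) :
    ((prodLayer Ji i + Delta3 p) ∩ (Arot '' (Arot '' Vset i)) ⊆
        Arot '' (Arot '' prodLayer Ji i)) ↔
      (p ≤ i → ∀ y : ℝ, ((i : ℝ) - 1, y) ∈ Ji → (y, (i : ℝ) - (p : ℝ)) ∈ Ji) := by
  have hp2 : (2:ℤ) ≤ (p:ℤ) := by exact_mod_cast hp.two_le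
  have hp2r : (2:ℝ) ≤ (p:ℝ) := by exact_mod_cast hp.two_le
  have hP0 : (0:ℤ) ≤ (p:ℤ) := by positivity
  have hI1 : (1:ℤ) ≤ (i:ℤ) := by exact_mod_cast hi1
  have hDel1 : ((1:ℝ), (0:ℝ), -(p:ℝ)) ∈ Delta3 p := by
    refine mem_Delta3' ?_ ?_ ?_ <;> simp <;> nlinarith [hp2r]
  have hDel3 : ((0:ℝ), -(p:ℝ), (1:ℝ)) ∈ Delta3 p := by
    refine mem_Delta3' ?_ ?_ ?_ <;> simp <;> nlinarith [hp2r]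
  have idealJi : ∀ (u1 u2 : ℝ) (v1 v2 : ℤ), (u1, u2) ∈ Ji →
      0 ≤ v1 → v1 ≤ (i:ℤ) → 0 ≤ v2 → v2 ≤ (i:ℤ) →
      ((v1:ℝ) - u1) + (p:ℝ) * ((v2:ℝ) - u2) ≤ 0 →
      (p:ℝ)^2 * ((v1:ℝ) - u1) + ((v2:ℝ) - u2) ≤ 0 →
      ((v1:ℝ), (v2:ℝ)) ∈ Ji := by
    intro u1 u2 v1 v2 hu hb1 hb2 hb3 hb4 hc1 hc2
    exact hJi.2 (u1, u2) hu ((v1:ℝ), (v2:ℝ)) ⟨v1, v2, rfl, hb1, hb2, hb3, hb4⟩ ⟨hc1, hc2⟩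
  constructor
  · -- forward direction
    intro h5 hpi yv hyv
    have hpiZ : (p:ℤ) ≤ (i:ℤ) := by exact_mod_cast hpi
    obtain ⟨a0, y0, heq0, _, _, hy00, hy0i⟩ := hJi.1 hyv
    have hyv0 : yv = (y0:ℝ) := congrArg Prod.snd heq0
    have hsum : (((i:ℝ)), yv, (i:ℝ) - (p:ℝ)) ∈
        (prodLayer Ji i + Delta3 p) ∩ (Arot '' (Arot '' Vset i)) := by
      constructor
      · rw [Set.mem_add]
        refine ⟨((i:ℝ) - 1, yv, (i:ℝ)), ⟨hyv, rfl⟩, ((1:ℝ), (0:ℝ), -(p:ℝ)), hDel1, ?_⟩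
        simp only [Prod.mk_add_mk, Prod.mk.injEq]
        refine ⟨by ring, by ring, by ring⟩
      · refine ⟨Arot (yv, (i:ℝ) - (p:ℝ), (i:ℝ)),
          ⟨(yv, (i:ℝ) - (p:ℝ), (i:ℝ)), ⟨?_, rfl⟩, rfl⟩, rfl⟩
        refine ⟨y0, (i:ℤ) - (p:ℤ), ?_, hy00, hy0i, by omega, by omega⟩
        simp only [Prod.mk.injEq]
        constructor
        · exact hyv0
        · push_cast; ring
    obtain ⟨w2, ⟨u, hu, rfl⟩, hAeq⟩ := h5 hsum
    obtain ⟨u1, u2, u3⟩ := u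
    simp only [Arot, Prod.mk.injEq] at hAeq
    obtain ⟨e3, e1, e2⟩ := hAeq
    rw [← e1, ← e2]
    exact hu.1
  · -- backward direction
    intro hstar w hw
    obtain ⟨hw1, hw2⟩ := hw
    obtain ⟨w', ⟨q, hqV, rfl⟩, rfl⟩ := hw2
    obtain ⟨q1, q2, q3⟩ := q
    obtain ⟨hqbox, hq3⟩ := hqV
    have hq3' : q3 = (i:ℝ) := hq3
    subst hq3'
    obtain ⟨xZ, yZ, hqeq, hx0, hxi, hy0, hyi⟩ := hqbox
    simp only [Prod.mk.injEq] at hqeq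
    obtain ⟨rfl, rfl⟩ := hqeq
    have hw1' : (((i:ℝ)), (xZ:ℝ), (yZ:ℝ)) ∈ prodLayer Ji i + Delta3 p := hw1
    suffices hgoal : ((xZ:ℝ), (yZ:ℝ)) ∈ Ji by
      exact Set.mem_image_of_mem _ (Set.mem_image_of_mem _ ⟨hgoal, rfl⟩)
    obtain ⟨u, hu, d, hd, hude⟩ := Set.mem_add.mp hw1'
    obtain ⟨u1, u2, u3⟩ := u
    obtain ⟨d1, d2, d3⟩ := d
    obtain ⟨huJ, hu3⟩ := hu
    have hu3' : u3 = (i:ℝ) := hu3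
    subst hu3'
    obtain ⟨aZ, bZ, heqU, ha0, hai, hb0, hbi⟩ := hJi.1 huJ
    simp only [Prod.mk.injEq] at heqU
    obtain ⟨rfl, rfl⟩ := heqU
    simp only [Prod.mk_add_mk, Prod.mk.injEq] at hude
    obtain ⟨he1, he2, he3⟩ := hude
    have hd1 : d1 = (i:ℝ) - (aZ:ℝ) := by linarith
    have hd2 : d2 = (xZ:ℝ) - (bZ:ℝ) := by linarith
    have hd3 : d3 = (yZ:ℝ) - (i:ℝ) := by linarith
    subst hd1; subst hd2; subst hd3
    simp only [Delta3, Set.mem_setOf_eq, prec3, Prod.fst_zero, Prod.snd_zero,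
      sub_zero] at hd
    obtain ⟨hAr, hBr, hCr⟩ := hd
    have hA : ((i:ℤ) - aZ) + (p:ℤ) * (xZ - bZ) + (p:ℤ)^2 * (yZ - (i:ℤ)) ≤ 0 := by
      exact_mod_cast hAr
    have hB : (p:ℤ)^2 * ((i:ℤ) - aZ) + (xZ - bZ) + (p:ℤ) * (yZ - (i:ℤ)) ≤ 0 := by
      exact_mod_cast hBr
    have hC : (p:ℤ) * ((i:ℤ) - aZ) + (p:ℤ)^2 * (xZ - bZ) + (yZ - (i:ℤ)) ≤ 0 := by
      exact_mod_cast hCr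
    rcases hai.eq_or_lt with rfl | haI
    · -- case a = i : pure 2D ideal step from (b, i)
      have hIb : ((i:ℝ), (bZ:ℝ)) ∈ Ji := by
        have : ((((i:ℕ):ℤ):ℝ), (bZ:ℝ)) ∈ Ji := huJ
        rwa [show (((i:ℕ):ℤ):ℝ) = ((i:ℕ):ℝ) by push_cast; ring] at this
      have hbI : ((bZ:ℝ), (i:ℝ)) ∈ Ji := by
        have hmem : (bZ:ℝ) ∈ {y : ℝ | ((i:ℝ), y) ∈ Ji} := hIb
        rw [← h1] at hmem
        exact hmem
      refine idealJi _ _ xZ yZ hbI hx0 hxi hy0 hyi ?_ ?_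
      · have hz : (xZ - bZ) + (p:ℤ) * (yZ - (i:ℤ)) ≤ 0 := by linarith [hB]
        exact_mod_cast hz
      · have hz : (p:ℤ)^2 * (xZ - bZ) + (yZ - (i:ℤ)) ≤ 0 := by linarith [hC]
        exact_mod_cast hz
    · -- case a < i
      have hs1 : 1 ≤ (i:ℤ) - aZ := by omega
      have hpiZ : (p:ℤ) ≤ (i:ℤ) := by
        by_contra hcon
        push_neg at hcon
        have hip : (i:ℤ) ≤ (p:ℤ) - 1 := by omega
        have t1 := mul_le_mul_of_nonneg_left hs1 (show (0:ℤ) ≤ (p:ℤ)^2 by positivity)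
        have t2 := mul_le_mul_of_nonneg_left hip hP0
        have t3 := mul_nonneg hP0 hy0
        linarith [hB, t1, t2, t3, hx0, hbi]
      have hpiN : p ≤ i := by exact_mod_cast hpiZ
      rcases hxi.eq_or_lt with rfl | hxI
      · -- case x = i : route through condition (4)
        have hxIr : (((i:ℕ):ℤ):ℝ) = ((i:ℕ):ℝ) := by push_cast; ring
        have hw0 : (((i:ℝ)), ((((i:ℕ):ℤ)):ℝ), (yZ:ℝ)) ∈ Arot '' Vset i := by
          refine ⟨((yZ:ℝ), (i:ℝ), ((((i:ℕ):ℤ)):ℝ)), ⟨?_, hxIr⟩, rfl⟩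
          refine ⟨yZ, ((i:ℕ):ℤ), ?_, hy0, hyi, by omega, le_refl _⟩
          simp only [Prod.mk.injEq]
          exact ⟨trivial, by push_cast; ring⟩
        obtain ⟨v, hv, hveq⟩ := h4 ⟨hw1', hw0⟩
        obtain ⟨v1, v2, v3⟩ := v
        simp only [Arot, Prod.mk.injEq] at hveq
        obtain ⟨e2', e3', e1'⟩ := hveq
        have hvJ : ((yZ:ℝ), (i:ℝ)) ∈ Ji := by
          have := hv.1
          rwa [e1', e2'] at this
        have : ((i:ℝ), (yZ:ℝ)) ∈ Ji := by
          have hmem : (yZ:ℝ) ∈ {x : ℝ | (x, (i:ℝ)) ∈ Ji} := hvJ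
          rw [h1] at hmem
          exact hmem
        rwa [hxIr]
      · -- case x < i
        have hxi1 : xZ ≤ (i:ℤ) - 1 := by omega
        by_cases hcor : ((i:ℤ) - aZ = 1) ∨ ((i:ℤ) - yZ ≤ (p:ℤ))
        · -- corner route via the condition (*)
          set b1 : ℤ := bZ - (p:ℤ)^2 * ((i:ℤ) - aZ - 1) with hb1def
          have hP31 : (0:ℤ) ≤ (p:ℤ)^3 - 1 := by
            have h8 := pow_le_pow_left₀ (by norm_num : (0:ℤ) ≤ 2) hp2 3
            norm_num at h8
            linarith
          have hb10 : 0 ≤ b1 := by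
            rcases hcor with h | h
            · have h0 : (i:ℤ) - aZ - 1 = 0 := by omega
              simp only [hb1def, h0, mul_zero, sub_zero]
              exact hb0
            · have t2 := mul_le_mul_of_nonneg_left h hP0
              simp only [hb1def]
              linarith [hB, hx0, t2]
          have hb1i : b1 ≤ (i:ℤ) := by
            have : (0:ℤ) ≤ (p:ℤ)^2 * ((i:ℤ) - aZ - 1) :=
              mul_nonneg (by positivity) (by omega)
            simp only [hb1def]; omega
          have hib1 : ((i:ℝ) - 1, (b1:ℝ)) ∈ Ji := by
            have hm : (((((i:ℤ) - 1 : ℤ)):ℝ), (b1:ℝ)) ∈ Ji := by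
              refine idealJi (aZ:ℝ) (bZ:ℝ) ((i:ℤ) - 1) b1 huJ (by omega) (by omega)
                hb10 hb1i ?_ ?_
              · have hz : ((i:ℤ) - 1 - aZ) + (p:ℤ) * (b1 - bZ) ≤ 0 := by
                  have hk := mul_nonneg (by omega : (0:ℤ) ≤ (i:ℤ) - aZ - 1) hP31
                  simp only [hb1def]
                  linarith [hk]
                exact_mod_cast hz
              · have hz : (p:ℤ)^2 * ((i:ℤ) - 1 - aZ) + (b1 - bZ) ≤ 0 := by
                  simp only [hb1def]
                  linarith []
                exact_mod_cast hz
            rwa [show ((((i:ℤ) - 1 : ℤ)):ℝ) = (i:ℝ) - 1 by push_cast; ring] at hm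
          have hcornJ : ((b1:ℝ), (i:ℝ) - (p:ℝ)) ∈ Ji := hstar hpiN (b1:ℝ) hib1
          have hipr : ((i:ℝ) - (p:ℝ)) = ((((i:ℤ) - (p:ℤ) : ℤ)):ℝ) := by push_cast; ring
          refine idealJi ((b1:ℝ)) ((i:ℝ) - (p:ℝ)) xZ yZ hcornJ hx0 hxi hy0 hyi ?_ ?_
          · have hz : (xZ - b1) + (p:ℤ) * (yZ - ((i:ℤ) - (p:ℤ))) ≤ 0 := by
              simp only [hb1def]
              linarith [hB]
            exact_mod_cast hz
          · have hz : (p:ℤ)^2 * (xZ - b1) + (yZ - ((i:ℤ) - (p:ℤ))) ≤ 0 := by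
              rcases hcor with h | h
              · have hPs : (p:ℤ) * ((i:ℤ) - aZ) = (p:ℤ) := by rw [h]; ring
                have hP40 : (p:ℤ)^4 * ((i:ℤ) - aZ - 1) = 0 := by
                  rw [show (i:ℤ) - aZ - 1 = 0 by omega]; ring
                simp only [hb1def]
                linarith [hC, hPs, hP40]
              · have hB2 := mul_le_mul_of_nonneg_left hB (show (0:ℤ) ≤ (p:ℤ)^2 by positivity)
                have hkey := mul_nonneg hP31 (show (0:ℤ) ≤ (p:ℤ) - ((i:ℤ) - yZ) by omega)
                simp only [hb1def]
                linarith [hB2, hkey]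
            exact_mod_cast hz
        · -- mid route through conditions (2), A-invariance, (3)
          push_neg at hcor
          obtain ⟨hs2', hrp⟩ := hcor
          have hs2 : 2 ≤ (i:ℤ) - aZ := by omega
          have hyp : yZ + (p:ℤ) ≤ (i:ℤ) - 1 := by omega
          have hyp0 : (0:ℤ) ≤ yZ + (p:ℤ) := by omega
          obtain ⟨jn, hjn⟩ : ∃ jn : ℕ, (jn:ℤ) = yZ + (p:ℤ) :=
            ⟨(yZ + (p:ℤ)).toNat, Int.toNat_of_nonneg hyp0⟩
          have hjni : jn < i := by omega
          have hjnr : ((jn:ℕ):ℝ) = (yZ:ℝ) + (p:ℝ) := by exact_mod_cast hjn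
          have hP31 : (0:ℤ) ≤ (p:ℤ)^3 - 1 := by
            have h8 := pow_le_pow_left₀ (by norm_num : (0:ℤ) ≤ 2) hp2 3
            norm_num at h8
            linarith
          set mid : ℝ × ℝ × ℝ := ((i:ℝ) - 1, (xZ:ℝ), ((jn:ℕ):ℝ)) with hmiddef
          have hmid1 : mid ∈ prodLayer Ji i + Delta3 p := by
            rw [Set.mem_add]
            refine ⟨((aZ:ℝ), (bZ:ℝ), (i:ℝ)), ⟨huJ, rfl⟩,
              ((i:ℝ) - 1 - (aZ:ℝ), (xZ:ℝ) - (bZ:ℝ), ((jn:ℕ):ℝ) - (i:ℝ)), ?_, ?_⟩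
            · refine mem_Delta3' ?_ ?_ ?_
              · have hz : ((i:ℤ) - 1 - aZ) + (p:ℤ) * (xZ - bZ)
                    + (p:ℤ)^2 * ((yZ + (p:ℤ)) - (i:ℤ)) ≤ 0 := by
                  have hPB := mul_le_mul_of_nonneg_left hB hP0
                  have hk := mul_nonneg hP31 (by omega : (0:ℤ) ≤ (i:ℤ) - aZ - 1)
                  linarith [hPB, hk]
                rw [hjnr]
                exact_mod_cast hz
              · have hz : (p:ℤ)^2 * ((i:ℤ) - 1 - aZ) + (xZ - bZ)
                    + (p:ℤ) * ((yZ + (p:ℤ)) - (i:ℤ)) ≤ 0 := by linarith [hB]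
                rw [hjnr]
                exact_mod_cast hz
              · have hz : (p:ℤ) * ((i:ℤ) - 1 - aZ) + (p:ℤ)^2 * (xZ - bZ)
                    + ((yZ + (p:ℤ)) - (i:ℤ)) ≤ 0 := by linarith [hC]
                rw [hjnr]
                exact_mod_cast hz
            · simp only [Prod.mk_add_mk, Prod.mk.injEq, hmiddef]
              refine ⟨by ring, by ring, by ring⟩
          have hmidbox : mid ∈ prodLayer (box 0 ((i:ℤ) - 1) 0 ((i:ℤ) - 1)) jn := by
            refine ⟨⟨(i:ℤ) - 1, xZ, ?_, by omega, le_refl _, hx0, hxi1⟩, rfl⟩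
            simp only [Prod.mk.injEq, hmiddef]
            exact ⟨by push_cast; ring, trivial⟩
          have hmidJ' : mid ∈ prodLayer (J' jn) jn := h2 jn hjni ⟨hmid1, hmidbox⟩
          have hmidU : mid ∈ orbitU J {j | j < i} := by
            rw [hJ'eq]
            exact Set.mem_biUnion hjni hmidJ'
          have hAmidU : Arot mid ∈ orbitU J {j | j < i} := by
            rw [← hconsInv]
            exact ⟨mid, hmidU, rfl⟩
          rw [hJ'eq] at hAmidU
          simp only [Set.mem_iUnion, Set.mem_setOf_eq] at hAmidU
          obtain ⟨j', hj', hAm⟩ := hAmidU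
          have hfin : ((xZ:ℝ), (yZ:ℝ), (i:ℝ)) ∈ prodLayer Ji i := by
            refine h3' j' hj' ⟨?_, ⟨⟨xZ, yZ, rfl, hx0, hxi, hy0, hyi⟩, rfl⟩⟩
            rw [Set.mem_add]
            refine ⟨Arot mid, hAm, ((0:ℝ), -(p:ℝ), (1:ℝ)), hDel3, ?_⟩
            simp only [Arot, hmiddef, Prod.mk_add_mk, Prod.mk.injEq]
            refine ⟨by ring, by rw [hjnr]; ring, by ring⟩
          exact hfin.1
end
end

section
/- Let i be a positive integer, let J be an ideal of [0,i−1]², let K be an ideal of [0,i]², and let b ≥ 0 be an integer. Then [J + D + (0,−b)] ∩ [0,i]² ⊆ K if and only if [J + D + (0,−b)] ∩ [0,i−1]² ⊆ K ∩ [0,i−1]². -/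
open Pointwise

noncomputable section

/-- Lemma 5.4. -/
theorem stmt18 (p i : ℕ) (hp : p.Prime) (hi : 0 < i)
    (J K : Set (ℝ × ℝ)) (b : ℕ)
    (hJ : IsIdeal2 p (box 0 ((i : ℤ) - 1) 0 ((i : ℤ) - 1)) J)
    (hK : IsIdeal2 p (box 0 (i : ℤ) 0 (i : ℤ)) K) :
    (J + D2 p + {((0 : ℝ), -(b : ℝ))}) ∩ box 0 (i : ℤ) 0 (i : ℤ) ⊆ K ↔
      (J + D2 p + {((0 : ℝ), -(b : ℝ))}) ∩ box 0 ((i : ℤ) - 1) 0 ((i : ℤ) - 1) ⊆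
        K ∩ box 0 ((i : ℤ) - 1) 0 ((i : ℤ) - 1) := by
  have hp2 : (2 : ℝ) ≤ (p : ℝ) := by exact_mod_cast hp.two_le
  have hp0 : (0 : ℝ) ≤ (p : ℝ) := by linarith
  have hcube : (0 : ℝ) ≤ (p : ℝ) ^ 3 - 1 := by nlinarith [hp2, sq_nonneg ((p:ℝ) - 2), sq_nonneg ((p:ℝ) + 1)]
  have hb0 : (0 : ℝ) ≤ (b : ℝ) := by positivity
  constructor
  · intro h w hw
    refine ⟨h ⟨hw.1, ?_⟩, hw.2⟩
    obtain ⟨x, y, hxy, h1, h2, h3, h4⟩ := hw.2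
    exact ⟨x, y, hxy, h1, by omega, h3, by omega⟩
  · intro h w hw
    obtain ⟨hw1, x, y, hxy, h1, h2, h3, h4⟩ := hw
    rw [Set.mem_add] at hw1
    obtain ⟨a, ha, t, ht, hat⟩ := hw1
    rw [Set.mem_add] at ha
    obtain ⟨j, hj, d, hd, hjd⟩ := ha
    rw [Set.mem_singleton_iff] at ht
    obtain ⟨hA, hB⟩ := hd
    obtain ⟨jx, jy, hjxy, hj1, hj2, hj3, hj4⟩ := hJ.1 hj
    subst ht hjd hxy hjxy
    have heq1 : (jx : ℝ) + d.1 = (x : ℝ) := by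
      have := congrArg Prod.fst hat; simpa using this
    have heq2 : (jy : ℝ) + d.2 - (b : ℝ) = (y : ℝ) := by
      have := congrArg Prod.snd hat
      simp at this; linarith
    have hjxr : (jx : ℝ) ≤ (i : ℝ) - 1 := by
      have : (jx : ℝ) ≤ (((i : ℤ) - 1 : ℤ) : ℝ) := by exact_mod_cast hj2
      push_cast at this; linarith
    have hjyr : (jy : ℝ) ≤ (i : ℝ) - 1 := by
      have : (jy : ℝ) ≤ (((i : ℤ) - 1 : ℤ) : ℝ) := by exact_mod_cast hj4
      push_cast at this; linarith
    have hwbig : ((x : ℝ), (y : ℝ)) ∈ box 0 (i : ℤ) 0 (i : ℤ) :=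
      ⟨x, y, rfl, h1, h2, h3, h4⟩
    -- helper: conclude from a good intermediate point (x', y')
    have key : ∀ x' y' : ℤ, 0 ≤ x' → x' ≤ (i : ℤ) - 1 → 0 ≤ y' → y' ≤ (i : ℤ) - 1 →
        (((x' : ℝ) - jx, (y' : ℝ) - jy + b) ∈ D2 p) →
        (((x : ℝ) - x', (y : ℝ) - y') ∈ D2 p) →
        ((x : ℝ), (y : ℝ)) ∈ K := by
      intro x' y' hx0 hx1 hy0 hy1 hd' hdw
      have hw'mem : (((x' : ℝ)), ((y' : ℝ))) ∈
          (J + D2 p + {((0 : ℝ), -(b : ℝ))}) ∩ box 0 ((i : ℤ) - 1) 0 ((i : ℤ) - 1) := by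
        constructor
        · rw [Set.mem_add]
          refine ⟨((jx : ℝ), (jy : ℝ)) + ((x' : ℝ) - jx, (y' : ℝ) - jy + b), ?_,
            ((0 : ℝ), -(b : ℝ)), rfl, ?_⟩
          · rw [Set.mem_add]
            exact ⟨_, hj, _, hd', rfl⟩
          · simp [Prod.ext_iff]; ring
        · exact ⟨x', y', rfl, hx0, hx1, hy0, hy1⟩
      have hw'K : (((x' : ℝ)), ((y' : ℝ))) ∈ K := (h hw'mem).1
      refine hK.2 _ hw'K _ hwbig ?_
      show (((x : ℝ), (y : ℝ)) - ((x' : ℝ), (y' : ℝ))) ∈ D2 p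
      simpa [Prod.ext_iff] using hdw
    by_cases hyi : y ≤ (i : ℤ) - 1
    · by_cases hxi : x ≤ (i : ℤ) - 1
      · -- w itself is in the small box
        exact (h ⟨⟨_, by rw [Set.mem_add]; exact ⟨_, hj, _, ⟨hA, hB⟩, rfl⟩, _, rfl, hat⟩,
          x, y, rfl, h1, hxi, h3, hyi⟩).1
      · -- x = i
        have hxi' : x = (i : ℤ) := by omega
        have hxr : (x : ℝ) = (i : ℝ) := by exact_mod_cast hxi'
        have hd1 : (1 : ℝ) ≤ d.1 := by linarith
        have hd1' : (0 : ℝ) ≤ d.1 := by linarith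
        set y' : ℤ := y + (p : ℤ) ^ 2 * ((i : ℤ) - jx) with hy'def
        have hy'r0 : (y' : ℝ) = (y : ℝ) + (p : ℝ) ^ 2 * ((i : ℝ) - jx) := by
          rw [hy'def]; push_cast; ring
        have hy'r2 : (y' : ℝ) = (y : ℝ) + (p : ℝ) ^ 2 * d.1 := by
          rw [hy'r0]; linear_combination (p : ℝ) ^ 2 * (-hxr - heq1)
        have hsq : (0 : ℝ) ≤ (p : ℝ) ^ 2 * d.1 := by positivity
        have hy0r : (0 : ℝ) ≤ (y : ℝ) := by exact_mod_cast h3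
        have hy'0 : 0 ≤ y' := by
          have : (0 : ℝ) ≤ (y' : ℝ) := by rw [hy'r2]; linarith
          exact_mod_cast this
        have hy'1 : y' ≤ (i : ℤ) - 1 := by
          have : (y' : ℝ) ≤ (((i : ℤ) - 1 : ℤ) : ℝ) := by
            push_cast; rw [hy'r2]; linarith [hB]
          exact_mod_cast this
        have ep : ((y' : ℝ)) - jy + b = (p : ℝ) ^ 2 * d.1 + d.2 := by
          linear_combination hy'r2 - heq2
        have hBp : (p : ℝ) * ((p : ℝ) ^ 2 * d.1 + d.2) ≤ (p : ℝ) * 0 :=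
          mul_le_mul_of_nonneg_left hB hp0
        have hcubed : (0 : ℝ) ≤ ((p : ℝ) ^ 3 - 1) * d.1 := mul_nonneg hcube hd1'
        refine key jx y' hj1 hj2 hy'0 hy'1 ⟨?_, ?_⟩ ⟨?_, ?_⟩
        · show ((jx : ℝ) - jx) + (p : ℝ) * ((y' : ℝ) - jy + b) ≤ 0
          rw [ep]; linarith
        · show (p : ℝ) ^ 2 * ((jx : ℝ) - jx) + ((y' : ℝ) - jy + b) ≤ 0
          rw [ep]; linarith [hB]
        · show ((x : ℝ) - jx) + (p : ℝ) * ((y : ℝ) - y') ≤ 0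
          have e3 : ((x : ℝ) - jx) + (p : ℝ) * ((y : ℝ) - y') = d.1 - (p : ℝ) ^ 3 * d.1 := by
            linear_combination -heq1 - (p : ℝ) * hy'r2
          rw [e3]; linarith [hcubed]
        · show (p : ℝ) ^ 2 * ((x : ℝ) - jx) + ((y : ℝ) - y') ≤ 0
          have e4 : (p : ℝ) ^ 2 * ((x : ℝ) - jx) + ((y : ℝ) - y') = 0 := by
            linear_combination -(p : ℝ) ^ 2 * heq1 - hy'r2
          rw [e4]
    · -- y = i
      have hyi' : y = (i : ℤ) := by omega
      have hyr : (y : ℝ) = (i : ℝ) := by exact_mod_cast hyi'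
      set y' : ℤ := max (jy - (b : ℤ)) 0 with hy'def
      have hy'0 : 0 ≤ y' := le_max_right _ _
      have hy'1 : y' ≤ (i : ℤ) - 1 := by
        have := hj4; omega
      have hy'br : (jy : ℝ) - b ≤ (y' : ℝ) := by
        have h' : jy - (b : ℤ) ≤ y' := le_max_left _ _
        have : ((jy - (b : ℤ) : ℤ) : ℝ) ≤ (y' : ℝ) := by exact_mod_cast h'
        push_cast at this; linarith
      have hy'1r : (y' : ℝ) ≤ (i : ℝ) - 1 := by
        have : (y' : ℝ) ≤ (((i : ℤ) - 1 : ℤ) : ℝ) := by exact_mod_cast hy'1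
        push_cast at this; linarith
      have hd2 : d.2 = (i : ℝ) - jy + b := by linarith
      have hd2ge : (i : ℝ) - (y' : ℝ) ≤ d.2 := by rw [hd2]; linarith
      have hiy1 : (1 : ℝ) ≤ (i : ℝ) - (y' : ℝ) := by linarith
      set x' : ℤ := x + (p : ℤ) * ((i : ℤ) - y') with hx'def
      have hx'r : (x' : ℝ) = (x : ℝ) + (p : ℝ) * ((i : ℝ) - (y' : ℝ)) := by
        rw [hx'def]; push_cast; ring
      have hq : (0 : ℝ) ≤ (p : ℝ) * (d.2 - ((i : ℝ) - (y' : ℝ))) :=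
        mul_nonneg hp0 (by linarith)
      have hq2 : (0 : ℝ) ≤ (p : ℝ) * ((i : ℝ) - (y' : ℝ)) := mul_nonneg hp0 (by linarith)
      have hx0r : (0 : ℝ) ≤ (x : ℝ) := by exact_mod_cast h1
      have hx'0 : 0 ≤ x' := by
        have : (0 : ℝ) ≤ (x' : ℝ) := by rw [hx'r]; linarith
        exact_mod_cast this
      have hx'1 : x' ≤ (i : ℤ) - 1 := by
        have : (x' : ℝ) ≤ (((i : ℤ) - 1 : ℤ) : ℝ) := by
          push_cast; rw [hx'r]; linarith [hA, hq, heq1, hjxr]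
        exact_mod_cast this
      have hprod : (0 : ℝ) ≤ ((p : ℝ) ^ 3 - 1) * (d.2 - ((i : ℝ) - (y' : ℝ))) :=
        mul_nonneg hcube (by linarith)
      have hprod2 : (0 : ℝ) ≤ ((p : ℝ) ^ 3 - 1) * ((i : ℝ) - (y' : ℝ)) :=
        mul_nonneg hcube (by linarith)
      have hmul : (p : ℝ) ^ 2 * (d.1 + (p : ℝ) * d.2) ≤ (p : ℝ) ^ 2 * 0 :=
        mul_le_mul_of_nonneg_left hA (by positivity)
      refine key x' y' hx'0 hx'1 hy'0 hy'1 ⟨?_, ?_⟩ ⟨?_, ?_⟩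
      · show ((x' : ℝ) - jx) + (p : ℝ) * ((y' : ℝ) - jy + b) ≤ 0
        have e1 : ((x' : ℝ) - jx) + (p : ℝ) * ((y' : ℝ) - jy + b) = d.1 + (p : ℝ) * d.2 := by
          rw [hx'r]; linear_combination -heq1 - (p : ℝ) * hd2
        rw [e1]; exact hA
      · show (p : ℝ) ^ 2 * ((x' : ℝ) - jx) + ((y' : ℝ) - jy + b) ≤ 0
        have e2 : (p : ℝ) ^ 2 * ((x' : ℝ) - jx) + ((y' : ℝ) - jy + b) =
            (p : ℝ) ^ 2 * (d.1 + (p : ℝ) * d.2) - ((p : ℝ) ^ 3 - 1) * (d.2 - ((i : ℝ) - (y' : ℝ))) := by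
          rw [hx'r]; linear_combination -(p : ℝ) ^ 2 * heq1 + ((p : ℝ) ^ 3 - 1 - (p : ℝ) ^ 3 + 1) * hd2 - hd2
        rw [e2]; linarith [hmul, hprod]
      · show ((x : ℝ) - x') + (p : ℝ) * ((y : ℝ) - y') ≤ 0
        have e3 : ((x : ℝ) - x') + (p : ℝ) * ((y : ℝ) - y') = 0 := by
          rw [hx'r]; linear_combination (p : ℝ) * hyr
        rw [e3]
      · show (p : ℝ) ^ 2 * ((x : ℝ) - x') + ((y : ℝ) - y') ≤ 0
        have e4 : (p : ℝ) ^ 2 * ((x : ℝ) - x') + ((y : ℝ) - y') =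
            -(((p : ℝ) ^ 3 - 1) * ((i : ℝ) - (y' : ℝ))) := by
          rw [hx'r]; linear_combination hyr
        rw [e4]; linarith [hprod2]
end
end
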